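/- arXiv:1002.0683 — 8 statements merged into one kernel-verified Lean document; each statement's English description precedes it below -/
import Mathlib

section
/- The tensor product of two contractions is a contraction: given contractions (M ⇄ N via ι, π, h) and (A ⇄ B via i, p, k), the data (M⊗A ⇄ N⊗B via ι⊗i, π⊗p, h∗k) with h∗k = ιπ⊗k + h⊗Id_B is a contraction. -/
open TensorProduct

/-- The tensor product of two contractions is a contraction.
Gradings are encoded through sign operators `σ` (the involution `(−1)^degree`),
which square to the identity, anticommute with the odd-degree maps `d, h, k` and
commute with the even-degree maps `ι, π, i, p`.  With the Koszul sign convention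
the differential on `N ⊗ B` is `dN⊗Id + σN⊗dB` and the tensor homotopy is
`h∗k = (ιπ)σ ⊗ k + h ⊗ Id`. -/
theorem stmt3 {R M N A B : Type*} [CommRing R]
    [AddCommGroup M] [Module R M] [AddCommGroup N] [Module R N]
    [AddCommGroup A] [Module R A] [AddCommGroup B] [Module R B]
    (dM : M →ₗ[R] M) (dN : N →ₗ[R] N) (dA : A →ₗ[R] A) (dB : B →ₗ[R] B)
    (hdM : dM ∘ₗ dM = 0) (hdN : dN ∘ₗ dN = 0) (hdA : dA ∘ₗ dA = 0) (hdB : dB ∘ₗ dB = 0)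
    (ι : M →ₗ[R] N) (π : N →ₗ[R] M) (h : N →ₗ[R] N)
    (i : A →ₗ[R] B) (p : B →ₗ[R] A) (k : B →ₗ[R] B)
    -- cochain maps
    (hι : dN ∘ₗ ι = ι ∘ₗ dM) (hπ : dM ∘ₗ π = π ∘ₗ dN)
    (hi : dB ∘ₗ i = i ∘ₗ dA) (hp : dA ∘ₗ p = p ∘ₗ dB)
    -- contraction axioms
    (c1 : π ∘ₗ ι = LinearMap.id)
    (c2 : ι ∘ₗ π - LinearMap.id = dN ∘ₗ h + h ∘ₗ dN)
    (c3 : π ∘ₗ h = 0) (c4 : h ∘ₗ ι = 0) (c5 : h ∘ₗ h = 0)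
    (c1' : p ∘ₗ i = LinearMap.id)
    (c2' : i ∘ₗ p - LinearMap.id = dB ∘ₗ k + k ∘ₗ dB)
    (c3' : p ∘ₗ k = 0) (c4' : k ∘ₗ i = 0) (c5' : k ∘ₗ k = 0)
    -- sign operators encoding the grading
    (σM : M →ₗ[R] M) (σN : N →ₗ[R] N) (σA : A →ₗ[R] A) (σB : B →ₗ[R] B)
    (sM : σM ∘ₗ σM = LinearMap.id) (sN : σN ∘ₗ σN = LinearMap.id)
    (sA : σA ∘ₗ σA = LinearMap.id) (sB : σB ∘ₗ σB = LinearMap.id)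
    (sdM : σM ∘ₗ dM = -(dM ∘ₗ σM)) (sdN : σN ∘ₗ dN = -(dN ∘ₗ σN))
    (sdA : σA ∘ₗ dA = -(dA ∘ₗ σA)) (sdB : σB ∘ₗ dB = -(dB ∘ₗ σB))
    (sh : σN ∘ₗ h = -(h ∘ₗ σN)) (sk : σB ∘ₗ k = -(k ∘ₗ σB))
    (sι : σN ∘ₗ ι = ι ∘ₗ σM) (sπ : π ∘ₗ σN = σM ∘ₗ π)
    (si : σB ∘ₗ i = i ∘ₗ σA) (sp : p ∘ₗ σB = σA ∘ₗ p) :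
    -- the tensor data
    let DS : M ⊗[R] A →ₗ[R] M ⊗[R] A := map dM LinearMap.id + map σM dA
    let DT : N ⊗[R] B →ₗ[R] N ⊗[R] B := map dN LinearMap.id + map σN dB
    let I : M ⊗[R] A →ₗ[R] N ⊗[R] B := map ι i
    let P : N ⊗[R] B →ₗ[R] M ⊗[R] A := map π p
    let H : N ⊗[R] B →ₗ[R] N ⊗[R] B := map ((ι ∘ₗ π) ∘ₗ σN) k + map h LinearMap.id
    -- ... form a contraction of differential graded modules:
    DS ∘ₗ DS = 0 ∧ DT ∘ₗ DT = 0 ∧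
    DT ∘ₗ I = I ∘ₗ DS ∧ DS ∘ₗ P = P ∘ₗ DT ∧
    P ∘ₗ I = LinearMap.id ∧
    I ∘ₗ P - LinearMap.id = DT ∘ₗ H + H ∘ₗ DT ∧
    P ∘ₗ H = 0 ∧ H ∘ₗ I = 0 ∧ H ∘ₗ H = 0 := by
  -- elementwise forms of all hypotheses
  have edM : ∀ x, dM (dM x) = 0 := fun x => by simpa using LinearMap.congr_fun hdM x
  have edN : ∀ x, dN (dN x) = 0 := fun x => by simpa using LinearMap.congr_fun hdN x
  have edA : ∀ x, dA (dA x) = 0 := fun x => by simpa using LinearMap.congr_fun hdA x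
  have edB : ∀ x, dB (dB x) = 0 := fun x => by simpa using LinearMap.congr_fun hdB x
  have eι : ∀ x, dN (ι x) = ι (dM x) := fun x => by simpa using LinearMap.congr_fun hι x
  have eπ : ∀ x, dM (π x) = π (dN x) := fun x => by simpa using LinearMap.congr_fun hπ x
  have ei : ∀ x, dB (i x) = i (dA x) := fun x => by simpa using LinearMap.congr_fun hi x
  have ep : ∀ x, dA (p x) = p (dB x) := fun x => by simpa using LinearMap.congr_fun hp x
  have e1 : ∀ x, π (ι x) = x := fun x => by simpa using LinearMap.congr_fun c1 x
  have e1' : ∀ x, p (i x) = x := fun x => by simpa using LinearMap.congr_fun c1' x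
  have e2 : ∀ x, ι (π x) = x + dN (h x) + h (dN x) := fun x => by
    have := LinearMap.congr_fun c2 x
    simp only [LinearMap.sub_apply, LinearMap.comp_apply, LinearMap.id_apply,
      LinearMap.add_apply] at this
    rw [sub_eq_iff_eq_add] at this
    rw [this]; abel
  have e2' : ∀ x, i (p x) = x + dB (k x) + k (dB x) := fun x => by
    have := LinearMap.congr_fun c2' x
    simp only [LinearMap.sub_apply, LinearMap.comp_apply, LinearMap.id_apply,
      LinearMap.add_apply] at this
    rw [sub_eq_iff_eq_add] at this
    rw [this]; abel
  have e3 : ∀ x, π (h x) = 0 := fun x => by simpa using LinearMap.congr_fun c3 x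
  have e4 : ∀ x, h (ι x) = 0 := fun x => by simpa using LinearMap.congr_fun c4 x
  have e5 : ∀ x, h (h x) = 0 := fun x => by simpa using LinearMap.congr_fun c5 x
  have e3' : ∀ x, p (k x) = 0 := fun x => by simpa using LinearMap.congr_fun c3' x
  have e4' : ∀ x, k (i x) = 0 := fun x => by simpa using LinearMap.congr_fun c4' x
  have e5' : ∀ x, k (k x) = 0 := fun x => by simpa using LinearMap.congr_fun c5' x
  have fM : ∀ x, σM (σM x) = x := fun x => by simpa using LinearMap.congr_fun sM x
  have fN : ∀ x, σN (σN x) = x := fun x => by simpa using LinearMap.congr_fun sN x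
  have fA : ∀ x, σA (σA x) = x := fun x => by simpa using LinearMap.congr_fun sA x
  have fB : ∀ x, σB (σB x) = x := fun x => by simpa using LinearMap.congr_fun sB x
  have gM : ∀ x, σM (dM x) = -dM (σM x) := fun x => by simpa using LinearMap.congr_fun sdM x
  have gN : ∀ x, σN (dN x) = -dN (σN x) := fun x => by simpa using LinearMap.congr_fun sdN x
  have gA : ∀ x, σA (dA x) = -dA (σA x) := fun x => by simpa using LinearMap.congr_fun sdA x
  have gB : ∀ x, σB (dB x) = -dB (σB x) := fun x => by simpa using LinearMap.congr_fun sdB x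
  have gh : ∀ x, σN (h x) = -h (σN x) := fun x => by simpa using LinearMap.congr_fun sh x
  have gk : ∀ x, σB (k x) = -k (σB x) := fun x => by simpa using LinearMap.congr_fun sk x
  have gι : ∀ x, σN (ι x) = ι (σM x) := fun x => by simpa using LinearMap.congr_fun sι x
  have gπ : ∀ x, σM (π x) = π (σN x) := fun x => by simpa using (LinearMap.congr_fun sπ x).symm
  have gi : ∀ x, σB (i x) = i (σA x) := fun x => by simpa using LinearMap.congr_fun si x
  have gp : ∀ x, σA (p x) = p (σB x) := fun x => by simpa using (LinearMap.congr_fun sp x).symm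
  have eX : ∀ z, h (dN (h z)) = -h z := fun z => by
    have h0 : h (ι (π z)) = 0 := e4 (π z)
    rw [e2 z] at h0
    simp only [map_add, e5, add_zero] at h0
    exact eq_neg_of_add_eq_zero_right h0
  have eX' : ∀ z, k (dB (k z)) = -k z := fun z => by
    have h0 : k (i (p z)) = 0 := e4' (p z)
    rw [e2' z] at h0
    simp only [map_add, e5', add_zero] at h0
    exact eq_neg_of_add_eq_zero_right h0
  intro DS DT I P H
  refine ⟨?_, ?_, ?_, ?_, ?_, ?_, ?_, ?_, ?_⟩ <;>
  · apply TensorProduct.ext'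
    intro x y
    simp only [DS, DT, I, P, H, LinearMap.comp_apply, LinearMap.add_apply,
      LinearMap.sub_apply, LinearMap.zero_apply, LinearMap.id_apply, map_tmul,
      map_add, map_neg, map_zero, tmul_add, add_tmul, tmul_neg, neg_tmul,
      tmul_zero, zero_tmul, edM, edN, edA, edB, eι, eπ, ei, ep, e1, e1', e2, e2',
      e3, e4, e5, e3', e4', e5', fM, fN, fA, fB, gM, gN, gA, gB, gh, gk, gι, gπ,
      gi, gp, eX, eX', neg_neg]
    try abel
end

section
/- The tensor product of contractions is associative: up to the canonical isomorphism (L⊗M)⊗N ≅ L⊗(M⊗N), ((h∗k)∗l) = (h∗(k∗l)) as homotopies of the corresponding triple tensor product contractions. -/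
open TensorProduct

/-- The tensor product of contractions is associative: up to the
canonical isomorphism `(N⊗B)⊗C ≅ N⊗(B⊗C)`, one has `(h∗k)∗l = h∗(k∗l)`, where
`h∗k = ιπ⊗k + h⊗Id` (Koszul signs are encoded via the sign operators `σ`). -/
theorem stmt4 {R M N A B E C : Type*} [CommRing R]
    [AddCommGroup M] [Module R M] [AddCommGroup N] [Module R N]
    [AddCommGroup A] [Module R A] [AddCommGroup B] [Module R B]
    [AddCommGroup E] [Module R E] [AddCommGroup C] [Module R C]
    (dM : M →ₗ[R] M) (dN : N →ₗ[R] N) (dA : A →ₗ[R] A) (dB : B →ₗ[R] B)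
    (dE : E →ₗ[R] E) (dC : C →ₗ[R] C)
    (hdM : dM ∘ₗ dM = 0) (hdN : dN ∘ₗ dN = 0) (hdA : dA ∘ₗ dA = 0)
    (hdB : dB ∘ₗ dB = 0) (hdE : dE ∘ₗ dE = 0) (hdC : dC ∘ₗ dC = 0)
    (ι : M →ₗ[R] N) (π : N →ₗ[R] M) (h : N →ₗ[R] N)
    (i : A →ₗ[R] B) (p : B →ₗ[R] A) (k : B →ₗ[R] B)
    (j : E →ₗ[R] C) (q : C →ₗ[R] E) (l : C →ₗ[R] C)
    -- cochain maps
    (hι : dN ∘ₗ ι = ι ∘ₗ dM) (hπ : dM ∘ₗ π = π ∘ₗ dN)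
    (hi : dB ∘ₗ i = i ∘ₗ dA) (hp : dA ∘ₗ p = p ∘ₗ dB)
    (hj : dC ∘ₗ j = j ∘ₗ dE) (hq : dE ∘ₗ q = q ∘ₗ dC)
    -- contraction axioms
    (c1 : π ∘ₗ ι = LinearMap.id)
    (c2 : ι ∘ₗ π - LinearMap.id = dN ∘ₗ h + h ∘ₗ dN)
    (c3 : π ∘ₗ h = 0) (c4 : h ∘ₗ ι = 0) (c5 : h ∘ₗ h = 0)
    (c1' : p ∘ₗ i = LinearMap.id)
    (c2' : i ∘ₗ p - LinearMap.id = dB ∘ₗ k + k ∘ₗ dB)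
    (c3' : p ∘ₗ k = 0) (c4' : k ∘ₗ i = 0) (c5' : k ∘ₗ k = 0)
    (c1'' : q ∘ₗ j = LinearMap.id)
    (c2'' : j ∘ₗ q - LinearMap.id = dC ∘ₗ l + l ∘ₗ dC)
    (c3'' : q ∘ₗ l = 0) (c4'' : l ∘ₗ j = 0) (c5'' : l ∘ₗ l = 0)
    -- sign operators encoding the grading
    (σN : N →ₗ[R] N) (σB : B →ₗ[R] B) (σC : C →ₗ[R] C)
    (sN : σN ∘ₗ σN = LinearMap.id) (sB : σB ∘ₗ σB = LinearMap.id)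
    (sC : σC ∘ₗ σC = LinearMap.id)
    (sdN : σN ∘ₗ dN = -(dN ∘ₗ σN)) (sdB : σB ∘ₗ dB = -(dB ∘ₗ σB))
    (sdC : σC ∘ₗ dC = -(dC ∘ₗ σC))
    (sh : σN ∘ₗ h = -(h ∘ₗ σN)) (sk : σB ∘ₗ k = -(k ∘ₗ σB))
    (sl : σC ∘ₗ l = -(l ∘ₗ σC)) :
    -- the tensor homotopies
    let hk : N ⊗[R] B →ₗ[R] N ⊗[R] B := map ((ι ∘ₗ π) ∘ₗ σN) k + map h LinearMap.id
    let kl : B ⊗[R] C →ₗ[R] B ⊗[R] C := map ((i ∘ₗ p) ∘ₗ σB) l + map k LinearMap.id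
    let hk_l : (N ⊗[R] B) ⊗[R] C →ₗ[R] (N ⊗[R] B) ⊗[R] C :=
      map ((map (ι ∘ₗ π) (i ∘ₗ p)) ∘ₗ (map σN σB)) l + map hk LinearMap.id
    let h_kl : N ⊗[R] (B ⊗[R] C) →ₗ[R] N ⊗[R] (B ⊗[R] C) :=
      map ((ι ∘ₗ π) ∘ₗ σN) kl + map h LinearMap.id
    (TensorProduct.assoc R N B C).toLinearMap ∘ₗ hk_l =
      h_kl ∘ₗ (TensorProduct.assoc R N B C).toLinearMap := by
  intro hk kl hk_l h_kl
  apply TensorProduct.ext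
  apply TensorProduct.ext
  ext n b c
  simp [hk, kl, hk_l, h_kl, tmul_add, add_tmul, add_assoc]
end

section
/- For a contraction (M ⇄ N via ι, π, h) and the induced maps T(ι) = ⊕ι^{⊗n}, T(π) = ⊕π^{⊗n} between reduced tensor coalgebras, with Th = ⊕_n Σ_{i=1}^n (ιπ)^{⊗(i−1)}⊗h⊗Id^{⊗(n−i)}, the identity (T(ιπ)⊗Th + Th⊗Id) ∘ 𝔞 = 𝔞 ∘ Th holds, where 𝔞 is the reduced deconcatenation coproduct; hence (T̄(M) ⇄ T̄(N) via T(ι), T(π), Th) is a coalgebra contraction. -/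
/-!
Every map on the tensor powers is defined by recursion along `V^{⊗(n+2)} = V ⊗ V^{⊗(n+1)}`, so
each identity is proved by induction on the length; its inductive step is an identity between
maps on a tensor product `V ⊗ X` that follows from the corresponding identities on `V` and on `X`.
In the homotopy formula for `h' = h ⊗ 1 + A ⊗ H` with `A = ιπσ`, the cross terms
`(dA + Ad) ⊗ H` and `(σh + hσ) ⊗ D` vanish by the Koszul sign rules, and `σA = Aσ = ιπ` turns the
remaining terms into `(ιπ - 1) ⊗ 1 + ιπ ⊗ (DH + HD)`. The coproduct identity is proved by
induction on the length of the left factor, moving the associator past the maps by naturality.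
-/

open TensorProduct

namespace Stmt5

variable (R : Type) [CommRing R]

/-- The tower of tensor powers: `PowObj V n = V^{⊗(n+1)}`. -/
noncomputable def PowObj (V : Type) [AddCommGroup V] [Module R V] : ℕ → ModuleCat R
  | 0 => ModuleCat.of R V
  | n + 1 => ModuleCat.of R (V ⊗[R] (PowObj V n))

/-- `TPow R V n = V^{⊗(n+1)}`, the `n`-th component of the reduced tensor
coalgebra `T̄(V) = ⊕_{m ≥ 1} V^{⊗m}`. -/
abbrev TPow (V : Type) [AddCommGroup V] [Module R V] (n : ℕ) : Type :=
  PowObj R V n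

variable {V W : Type} [AddCommGroup V] [Module R V] [AddCommGroup W] [Module R W]

/-- `f^{⊗(n+1)} : V^{⊗(n+1)} → W^{⊗(n+1)}` for a degree-zero map `f`. -/
noncomputable def powMap (f : V →ₗ[R] W) : ∀ n, TPow R V n →ₗ[R] TPow R W n
  | 0 => f
  | n + 1 => TensorProduct.map f (powMap f n)

/-- The component `V^{⊗(n+i+2)} → V^{⊗(i+1)} ⊗ V^{⊗(n+1)}` of the (reduced)
deconcatenation coproduct `𝔞`. -/
noncomputable def splitPow :
    ∀ (i n : ℕ), TPow R V (n + i + 1) →ₗ[R] (TPow R V i) ⊗[R] (TPow R V n)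
  | 0, _ => LinearMap.id
  | i + 1, n =>
    (TensorProduct.assoc R V (TPow R V i) (TPow R V n)).symm.toLinearMap
      ∘ₗ (TensorProduct.map LinearMap.id (splitPow i n))

/-- The tensor-power extension of a sign operator `σV` (Koszul signs). -/
noncomputable def sgnPow (σV : V →ₗ[R] V) : ∀ n, TPow R V n →ₗ[R] TPow R V n
  | 0 => σV
  | n + 1 => TensorProduct.map σV (sgnPow σV n)

/-- The differential on tensor powers: `d⊗Id^{⊗n} + σ⊗d^{(n)}` (Koszul signs). -/
noncomputable def dPow (d σV : V →ₗ[R] V) : ∀ n, TPow R V n →ₗ[R] TPow R V n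
  | 0 => d
  | n + 1 => TensorProduct.map d LinearMap.id + TensorProduct.map σV (dPow d σV n)

/-- The tensor-trick homotopy `T^{n+1}h = Σ_{i} (ιπ)^{⊗(i-1)} ⊗ h ⊗ Id^{⊗(n+1-i)}`
with Koszul signs encoded via the sign operator `σV`. -/
noncomputable def Th (ι : W →ₗ[R] V) (π : V →ₗ[R] W) (σV h : V →ₗ[R] V) :
    ∀ n, TPow R V n →ₗ[R] TPow R V n
  | 0 => h
  | n + 1 =>
    TensorProduct.map h LinearMap.id
      + TensorProduct.map ((ι ∘ₗ π) ∘ₗ σV) (Th ι π σV h n)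

section TensorTrick

open LinearMap (comp_assoc comp_id id_comp comp_add add_comp)

variable {R}
variable {X X' X₁ X₂ Y X₁' X₂' Y' : Type} [AddCommGroup X] [Module R X]
  [AddCommGroup X'] [Module R X'] [AddCommGroup X₁] [Module R X₁] [AddCommGroup X₂] [Module R X₂]
  [AddCommGroup Y] [Module R Y] [AddCommGroup X₁'] [Module R X₁'] [AddCommGroup X₂'] [Module R X₂']
  [AddCommGroup Y'] [Module R Y']

theorem _root_.TensorProduct.map_sub_left (f₁ f₂ : V →ₗ[R] W) (g : X →ₗ[R] X') :
    map (f₁ - f₂) g = map f₁ g - map f₂ g :=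
  (mapBilinear (RingHom.id R) V X W X').map_sub₂ f₁ f₂ g

theorem _root_.TensorProduct.map_sub_right (f : V →ₗ[R] W) (g₁ g₂ : X →ₗ[R] X') :
    map f (g₁ - g₂) = map f g₁ - map f g₂ :=
  (mapBilinear (RingHom.id R) V X W X' f).map_sub g₁ g₂

theorem comp_comm_of_intertwines {ι : W →ₗ[R] V} {π : V →ₗ[R] W} {f : V →ₗ[R] V} {g : W →ₗ[R] W}
    (hι : f ∘ₗ ι = ι ∘ₗ g) (hπ : g ∘ₗ π = π ∘ₗ f) : f ∘ₗ (ι ∘ₗ π) = (ι ∘ₗ π) ∘ₗ f := by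
  rw [← comp_assoc, hι, comp_assoc, hπ, comp_assoc]

/- One recursion step of `dPow`, `Th` and `splitPow`: by definition `dPow (n + 1)`,
`Th (n + 1)` and `splitPow (i + 1) n` are `tensorDiff d σ (dPow n)`,
`tensorHomotopy ((ι ∘ₗ π) ∘ₗ σ) h (Th n)` and `tensorSplit (splitPow i n)`. -/
def tensorDiff (d σ : V →ₗ[R] V) (D : X →ₗ[R] X) : V ⊗[R] X →ₗ[R] V ⊗[R] X :=
  map d LinearMap.id + map σ D

def tensorHomotopy (a h : V →ₗ[R] V) (H : X →ₗ[R] X) : V ⊗[R] X →ₗ[R] V ⊗[R] X :=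
  map h LinearMap.id + map a H

def tensorSplit (s : Y →ₗ[R] X₁ ⊗[R] X₂) : V ⊗[R] Y →ₗ[R] (V ⊗[R] X₁) ⊗[R] X₂ :=
  (TensorProduct.assoc R V X₁ X₂).symm.toLinearMap ∘ₗ map LinearMap.id s

theorem tensorDiff_comp_map {dV σV : V →ₗ[R] V} {dW σW : W →ₗ[R] W} {D : X →ₗ[R] X}
    {D' : X' →ₗ[R] X'} {f : V →ₗ[R] W} {F : X →ₗ[R] X'}
    (hd : dW ∘ₗ f = f ∘ₗ dV) (hσ : σW ∘ₗ f = f ∘ₗ σV) (hD : D' ∘ₗ F = F ∘ₗ D) :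
    tensorDiff dW σW D' ∘ₗ map f F = map f F ∘ₗ tensorDiff dV σV D := by
  simp only [tensorDiff, add_comp, comp_add, ← map_comp, hd, hσ, hD, id_comp, comp_id]

theorem map_comp_tensorHomotopy_eq_zero {π : V →ₗ[R] W} {a h : V →ₗ[R] V} {P : X →ₗ[R] X'}
    {H : X →ₗ[R] X} (hπh : π ∘ₗ h = 0) (hPH : P ∘ₗ H = 0) :
    map π P ∘ₗ tensorHomotopy a h H = 0 := by
  simp only [tensorHomotopy, comp_add, ← map_comp, hπh, hPH, map_zero_left, map_zero_right,
    add_zero]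

theorem tensorHomotopy_comp_map_eq_zero {ι : W →ₗ[R] V} {a h : V →ₗ[R] V} {I : X' →ₗ[R] X}
    {H : X →ₗ[R] X} (hhι : h ∘ₗ ι = 0) (hHI : H ∘ₗ I = 0) :
    tensorHomotopy a h H ∘ₗ map ι I = 0 := by
  simp only [tensorHomotopy, add_comp, ← map_comp, hhι, hHI, map_zero_left, map_zero_right,
    add_zero]

theorem tensorHomotopy_comp_self {a h : V →ₗ[R] V} {H : X →ₗ[R] X} (hh : h ∘ₗ h = 0)
    (hha : h ∘ₗ a = 0) (hah : a ∘ₗ h = 0) (hH : H ∘ₗ H = 0) :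
    tensorHomotopy a h H ∘ₗ tensorHomotopy a h H = 0 := by
  simp only [tensorHomotopy, add_comp, comp_add, ← map_comp, hh, hha, hah, hH, map_zero_left,
    map_zero_right, add_zero]

theorem map_comp_map_sub_id {ι : W →ₗ[R] V} {π : V →ₗ[R] W} {d σ a h : V →ₗ[R] V}
    {I : X' →ₗ[R] X} {P : X →ₗ[R] X'} {D H : X →ₗ[R] X}
    (hda : d ∘ₗ a + a ∘ₗ d = 0) (hσh : σ ∘ₗ h + h ∘ₗ σ = 0) (hσa : σ ∘ₗ a = ι ∘ₗ π)
    (haσ : a ∘ₗ σ = ι ∘ₗ π) (hh : ι ∘ₗ π - LinearMap.id = d ∘ₗ h + h ∘ₗ d)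
    (hH : I ∘ₗ P - LinearMap.id = D ∘ₗ H + H ∘ₗ D) :
    map ι I ∘ₗ map π P - LinearMap.id =
      tensorDiff d σ D ∘ₗ tensorHomotopy a h H + tensorHomotopy a h H ∘ₗ tensorDiff d σ D := by
  have expand :
      tensorDiff d σ D ∘ₗ tensorHomotopy a h H + tensorHomotopy a h H ∘ₗ tensorDiff d σ D =
        map (d ∘ₗ h + h ∘ₗ d) LinearMap.id + map (ι ∘ₗ π) (D ∘ₗ H + H ∘ₗ D)
          + map (d ∘ₗ a + a ∘ₗ d) H + map (σ ∘ₗ h + h ∘ₗ σ) D := by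
    simp only [tensorDiff, tensorHomotopy, add_comp, comp_add, ← map_comp, map_add_left,
      map_add_right, id_comp, comp_id, hσa, haσ]
    abel
  rw [expand, hda, hσh, map_zero_left, map_zero_left, ← hh, ← hH, map_sub_left, map_sub_right,
    map_id, ← map_comp]
  abel

theorem tensorSplit_comp_map {s : Y →ₗ[R] X₁ ⊗[R] X₂} {s' : Y' →ₗ[R] X₁' ⊗[R] X₂'}
    {f : V →ₗ[R] W} {F : Y →ₗ[R] Y'} {F₁ : X₁ →ₗ[R] X₁'} {F₂ : X₂ →ₗ[R] X₂'}
    (hs : s' ∘ₗ F = map F₁ F₂ ∘ₗ s) :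
    tensorSplit s' ∘ₗ map f F = map (map f F₁) F₂ ∘ₗ tensorSplit s := by
  rw [tensorSplit, tensorSplit, comp_assoc, ← map_comp, id_comp, hs, ← comp_id f, map_comp,
    ← comp_assoc, ← map_map_comp_assoc_symm_eq, comp_assoc, comp_id]

theorem tensorSplit_comp_tensorHomotopy {s : Y →ₗ[R] X₁ ⊗[R] X₂} {e σ h : V →ₗ[R] V}
    {H : Y →ₗ[R] Y} {P S H₁ : X₁ →ₗ[R] X₁} {H₂ : X₂ →ₗ[R] X₂}
    (hs : s ∘ₗ H = (map (P ∘ₗ S) H₂ + map H₁ LinearMap.id) ∘ₗ s) :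
    tensorSplit s ∘ₗ tensorHomotopy (e ∘ₗ σ) h H =
      (map (map e P ∘ₗ map σ S) H₂ + map (tensorHomotopy (e ∘ₗ σ) h H₁) LinearMap.id) ∘ₗ
        tensorSplit s := by
  simp only [tensorSplit, tensorHomotopy, ← map_comp, map_add_left, add_comp, comp_add,
    ← comp_assoc, map_map_comp_assoc_symm_eq]
  simp only [comp_assoc, ← map_comp, hs, add_comp, comp_add, map_add_right, comp_id, id_comp,
    map_id]
  abel

end TensorTrick

section TensorPowers

open LinearMap (comp_assoc comp_id id_comp comp_neg comp_zero zero_comp)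

variable {R} {U : Type} [AddCommGroup U] [Module R U]

theorem powMap_comp (f : V →ₗ[R] W) (g : U →ₗ[R] V) (n : ℕ) :
    powMap R (f ∘ₗ g) n = powMap R f n ∘ₗ powMap R g n := by
  induction n with
  | zero => rfl
  | succ n ih => exact (congrArg (map (f ∘ₗ g)) ih).trans (map_comp _ _ _ _)

theorem powMap_id (n : ℕ) : powMap R (LinearMap.id : V →ₗ[R] V) n = LinearMap.id := by
  induction n with
  | zero => rfl
  | succ n ih => exact (congrArg (map LinearMap.id) ih).trans map_id

theorem dPow_comp_powMap {f : V →ₗ[R] W} {dV σV : V →ₗ[R] V} {dW σW : W →ₗ[R] W}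
    (hd : dW ∘ₗ f = f ∘ₗ dV) (hσ : σW ∘ₗ f = f ∘ₗ σV) (n : ℕ) :
    dPow R dW σW n ∘ₗ powMap R f n = powMap R f n ∘ₗ dPow R dV σV n := by
  induction n with
  | zero => exact hd
  | succ n ih => exact tensorDiff_comp_map hd hσ ih

theorem splitPow_comp_powMap (f : V →ₗ[R] W) (i n : ℕ) :
    splitPow R i n ∘ₗ powMap R f (n + i + 1) =
      map (powMap R f i) (powMap R f n) ∘ₗ splitPow R i n := by
  induction i with
  | zero => exact (id_comp _).trans (comp_id _).symm
  | succ i ih => exact tensorSplit_comp_map ih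

theorem powMap_comp_Th {ι : W →ₗ[R] V} {π : V →ₗ[R] W} {σ h : V →ₗ[R] V} (hπh : π ∘ₗ h = 0)
    (n : ℕ) : powMap R π n ∘ₗ Th R ι π σ h n = 0 := by
  induction n with
  | zero => exact hπh
  | succ n ih => exact map_comp_tensorHomotopy_eq_zero hπh ih

theorem Th_comp_powMap {ι : W →ₗ[R] V} {π : V →ₗ[R] W} {σ h : V →ₗ[R] V} (hhι : h ∘ₗ ι = 0)
    (n : ℕ) : Th R ι π σ h n ∘ₗ powMap R ι n = 0 := by
  induction n with
  | zero => exact hhι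
  | succ n ih => exact tensorHomotopy_comp_map_eq_zero hhι ih

theorem Th_comp_Th {ι : W →ₗ[R] V} {π : V →ₗ[R] W} {σ h : V →ₗ[R] V} (hπh : π ∘ₗ h = 0)
    (hhι : h ∘ₗ ι = 0) (hh : h ∘ₗ h = 0) (hσh : σ ∘ₗ h = -(h ∘ₗ σ)) (n : ℕ) :
    Th R ι π σ h n ∘ₗ Th R ι π σ h n = 0 := by
  have hha : h ∘ₗ ((ι ∘ₗ π) ∘ₗ σ) = 0 := by
    rw [← comp_assoc, ← comp_assoc, hhι, zero_comp, zero_comp]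
  have hah : ((ι ∘ₗ π) ∘ₗ σ) ∘ₗ h = 0 := by
    simp only [comp_assoc]
    rw [hσh, comp_neg, comp_neg, ← comp_assoc σ h π, hπh, zero_comp, comp_zero, neg_zero]
  induction n with
  | zero => exact hh
  | succ n ih => exact tensorHomotopy_comp_self hh hha hah ih

theorem powMap_comp_powMap_sub_id {ι : W →ₗ[R] V} {π : V →ₗ[R] W} {d σ h : V →ₗ[R] V}
    (hd : d ∘ₗ (ι ∘ₗ π) = (ι ∘ₗ π) ∘ₗ d) (hσ : σ ∘ₗ (ι ∘ₗ π) = (ι ∘ₗ π) ∘ₗ σ)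
    (hσσ : σ ∘ₗ σ = LinearMap.id) (hσd : σ ∘ₗ d = -(d ∘ₗ σ)) (hσh : σ ∘ₗ h = -(h ∘ₗ σ))
    (hh : ι ∘ₗ π - LinearMap.id = d ∘ₗ h + h ∘ₗ d) (n : ℕ) :
    powMap R ι n ∘ₗ powMap R π n - LinearMap.id =
      dPow R d σ n ∘ₗ Th R ι π σ h n + Th R ι π σ h n ∘ₗ dPow R d σ n := by
  have hda : d ∘ₗ ((ι ∘ₗ π) ∘ₗ σ) + ((ι ∘ₗ π) ∘ₗ σ) ∘ₗ d = 0 := by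
    rw [← comp_assoc, hd, comp_assoc, comp_assoc d σ (ι ∘ₗ π), hσd, comp_neg, add_neg_cancel]
  have hσa : σ ∘ₗ ((ι ∘ₗ π) ∘ₗ σ) = ι ∘ₗ π := by
    rw [← comp_assoc, hσ, comp_assoc, hσσ, comp_id]
  have haσ : ((ι ∘ₗ π) ∘ₗ σ) ∘ₗ σ = ι ∘ₗ π := by rw [comp_assoc, hσσ, comp_id]
  induction n with
  | zero => exact hh
  | succ n ih =>
    exact map_comp_map_sub_id hda (by rw [hσh, neg_add_cancel]) hσa haσ hh ih

theorem splitPow_comp_Th (ι : W →ₗ[R] V) (π : V →ₗ[R] W) (σ h : V →ₗ[R] V) (i n : ℕ) :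
    splitPow R i n ∘ₗ Th R ι π σ h (n + i + 1) =
      (map (powMap R (ι ∘ₗ π) i ∘ₗ sgnPow R σ i) (Th R ι π σ h n)
        + map (Th R ι π σ h i) LinearMap.id) ∘ₗ splitPow R i n := by
  induction i with
  | zero => exact (id_comp _).trans ((add_comm _ _).trans (comp_id _).symm)
  | succ i ih => exact tensorSplit_comp_tensorHomotopy ih

end TensorPowers

theorem stmt5 {M N : Type} [AddCommGroup M] [Module R M] [AddCommGroup N] [Module R N]
    (dM : M →ₗ[R] M) (dN : N →ₗ[R] N)
    (ι : M →ₗ[R] N) (π : N →ₗ[R] M) (h : N →ₗ[R] N)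
    (hι : dN ∘ₗ ι = ι ∘ₗ dM) (hπ : dM ∘ₗ π = π ∘ₗ dN)
    (c1 : π ∘ₗ ι = LinearMap.id)
    (c2 : ι ∘ₗ π - LinearMap.id = dN ∘ₗ h + h ∘ₗ dN)
    (c3 : π ∘ₗ h = 0) (c4 : h ∘ₗ ι = 0) (c5 : h ∘ₗ h = 0)
    -- sign operators encoding the grading
    (σM : M →ₗ[R] M) (σN : N →ₗ[R] N)
    (sN : σN ∘ₗ σN = LinearMap.id)
    (sdN : σN ∘ₗ dN = -(dN ∘ₗ σN))
    (sh : σN ∘ₗ h = -(h ∘ₗ σN))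
    (sι : σN ∘ₗ ι = ι ∘ₗ σM) (sπ : π ∘ₗ σN = σM ∘ₗ π) :
    -- (1) the coalgebra-homotopy identity `(T(ιπ)⊗Th + Th⊗Id) ∘ 𝔞 = 𝔞 ∘ Th`:
    (∀ i n : ℕ,
      splitPow R i n ∘ₗ Th R ι π σN h (n + i + 1) =
        (TensorProduct.map (powMap R (ι ∘ₗ π) i ∘ₗ sgnPow R σN i) (Th R ι π σN h n)
          + TensorProduct.map (Th R ι π σN h i) LinearMap.id) ∘ₗ splitPow R i n) ∧
    -- (2) `T(ι)` and `T(π)` are morphisms of graded coalgebras: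
    (∀ i n : ℕ,
      splitPow R i n ∘ₗ powMap R ι (n + i + 1) =
        TensorProduct.map (powMap R ι i) (powMap R ι n) ∘ₗ splitPow R i n) ∧
    (∀ i n : ℕ,
      splitPow R i n ∘ₗ powMap R π (n + i + 1) =
        TensorProduct.map (powMap R π i) (powMap R π n) ∘ₗ splitPow R i n) ∧
    -- (3) `(T̄(M) ⇄ T̄(N) via T(ι), T(π), Th)` is a contraction:
    (∀ n : ℕ, dPow R dM σM n ∘ₗ powMap R π n = powMap R π n ∘ₗ dPow R dN σN n) ∧
    (∀ n : ℕ, dPow R dN σN n ∘ₗ powMap R ι n = powMap R ι n ∘ₗ dPow R dM σM n) ∧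
    (∀ n : ℕ, powMap R π n ∘ₗ powMap R ι n = LinearMap.id) ∧
    (∀ n : ℕ,
      powMap R ι n ∘ₗ powMap R π n - LinearMap.id =
        dPow R dN σN n ∘ₗ Th R ι π σN h n + Th R ι π σN h n ∘ₗ dPow R dN σN n) ∧
    (∀ n : ℕ, powMap R π n ∘ₗ Th R ι π σN h n = 0) ∧
    (∀ n : ℕ, Th R ι π σN h n ∘ₗ powMap R ι n = 0) ∧
    (∀ n : ℕ, Th R ι π σN h n ∘ₗ Th R ι π σN h n = 0) :=
  ⟨splitPow_comp_Th ι π σN h, splitPow_comp_powMap ι, splitPow_comp_powMap π,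
    dPow_comp_powMap hπ sπ.symm, dPow_comp_powMap hι sι,
    fun n => by rw [← powMap_comp, c1, powMap_id],
    powMap_comp_powMap_sub_id (comp_comm_of_intertwines hι hπ)
      (comp_comm_of_intertwines sι sπ.symm) sN sdN sh c2,
    powMap_comp_Th c3, Th_comp_powMap c4, Th_comp_Th c3 c4 c5 sh⟩

end Stmt5
end

section
/- Let (M ⇄ N via ι, π, h) be a contraction and ∂ ∈ Hom¹(N,N) with ∂ ∈ 𝒩(N,h). Then the map ι_∂ = Σ_{n≥0}(h∂)^n ι : M → N is injective and π_∂ ι_∂ = Id_M, where π_∂ = Σ_{n≥0} π(∂h)^n. -/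
/-- For a contraction `(M ⇄ N via ι, π, h)` and `∂ ∈ 𝒩(N,h)` of
degree `1`, the map `ι_∂ = Σ_{n≥0}(h∂)^n ι` is injective and `π_∂ ι_∂ = Id_M`,
where `π_∂ = Σ_{n≥0} π(∂h)^n`. -/
theorem stmt6 {R M N : Type*} [CommRing R]
    [AddCommGroup M] [Module R M] [AddCommGroup N] [Module R N]
    (dM : M →ₗ[R] M) (dN : N →ₗ[R] N)
    (hdM : dM ∘ₗ dM = 0) (hdN : dN ∘ₗ dN = 0)
    (ι : M →ₗ[R] N) (π : N →ₗ[R] M) (h : N →ₗ[R] N)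
    (hι : dN ∘ₗ ι = ι ∘ₗ dM) (hπ : dM ∘ₗ π = π ∘ₗ dN)
    (c1 : π ∘ₗ ι = LinearMap.id)
    (c2 : ι ∘ₗ π - LinearMap.id = dN ∘ₗ h + h ∘ₗ dN)
    (c3 : π ∘ₗ h = 0) (c4 : h ∘ₗ ι = 0) (c5 : h ∘ₗ h = 0)
    (D : N →ₗ[R] N)
    -- `∂ ∈ 𝒩(N,h)`: the infinite sums are pointwise finite
    (n1 : ∀ x : M, ∃ s : ℕ, ∀ n ≥ s, ((h ∘ₗ D) ^ n) (ι x) = 0)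
    (n2 : ∀ y : N, ∃ s : ℕ, ∀ n ≥ s, π (((D ∘ₗ h) ^ n) y) = 0)
    -- the perturbed maps
    (ιD : M →ₗ[R] N) (hιD : ∀ x : M, ιD x = ∑ᶠ n : ℕ, ((h ∘ₗ D) ^ n) (ι x))
    (πD : N →ₗ[R] M) (hπD : ∀ y : N, πD y = ∑ᶠ n : ℕ, π (((D ∘ₗ h) ^ n) y)) :
    Function.Injective ιD ∧ πD ∘ₗ ιD = LinearMap.id := by
  have hπι : ∀ x : M, π (ι x) = x := fun x => congrArg (· x) c1
  have hhι : ∀ x : M, h (ι x) = 0 := fun x => congrArg (· x) c4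
  have hπh : ∀ y : N, π (h y) = 0 := fun y => congrArg (· y) c3
  have hhh : ∀ y : N, h (h y) = 0 := fun y => congrArg (· y) c5
  have key : ∀ (n m : ℕ) (x : M),
      π (((D ∘ₗ h) ^ n) (((h ∘ₗ D) ^ m) (ι x))) =
        if n = 0 ∧ m = 0 then x else 0 := by
    intro n m x
    match n, m with
    | 0, 0 => simp [hπι]
    | 0, m + 1 =>
      rw [pow_succ']
      simp [Module.End.mul_apply, hπh]
    | n + 1, 0 =>
      rw [pow_succ]
      simp [Module.End.mul_apply, hhι]
    | n + 1, m + 1 =>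
      rw [pow_succ, pow_succ']
      simp [Module.End.mul_apply, hhh]
  have main : ∀ x : M, πD (ιD x) = x := by
    intro x
    obtain ⟨s, hs⟩ := n1 x
    have hfin : ιD x = ∑ m ∈ Finset.range (s + 1), ((h ∘ₗ D) ^ m) (ι x) := by
      rw [hιD]
      refine finsum_eq_sum_of_support_subset _ fun m hm => ?_
      simp only [Finset.coe_range, Set.mem_Iio]
      by_contra hlt
      exact hm (hs m (by omega))
    rw [hfin, map_sum]
    have hterm : ∀ m : ℕ, πD (((h ∘ₗ D) ^ m) (ι x)) = if m = 0 then x else 0 := by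
      intro m
      rw [hπD]
      rcases eq_or_ne m 0 with rfl | hm
      · simp only [key, and_true, if_pos rfl]
        exact finsum_eq_single _ 0 (fun n hn => by simp [hn])
      · simp [key, hm]
    simp [hterm, Finset.sum_ite_eq']
  refine ⟨fun a b hab => by rw [← main a, ← main b, hab], ?_⟩
  ext x
  exact main x
end

section
/- Let (M ⇄ N via ι, π, h) be a coalgebra contraction of differential graded coalgebras, ∂ ∈ 𝒩(N,h) a coderivation of degree 1. Then for the tensor-square contraction with homotopy k = ιπ⊗h + h⊗Id and δ = ∂⊗Id + Id⊗∂, one has for all n ≥ 0: (kδ)^n(ι⊗ι) = Σ_{i+j=n} (h∂)^i ι ⊗ (h∂)^j ι. -/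
open TensorProduct

/-- For a coalgebra contraction `(M ⇄ N via ι, π, h)` and a
coderivation `∂ ∈ 𝒩(N,h)` of degree `1`, the tensor-square contraction with
homotopy `k = ιπ⊗h + h⊗Id` and `δ = ∂⊗Id + Id⊗∂` satisfies, for all `n ≥ 0`,
`(kδ)^n(ι⊗ι) = Σ_{i+j=n} (h∂)^i ι ⊗ (h∂)^j ι` (Koszul signs are encoded via
the sign operators `σ`). -/
theorem stmt9 {R M N : Type*} [CommRing R]
    [AddCommGroup M] [Module R M] [AddCommGroup N] [Module R N]
    (dM : M →ₗ[R] M) (dN : N →ₗ[R] N)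
    (hdM : dM ∘ₗ dM = 0) (hdN : dN ∘ₗ dN = 0)
    (ι : M →ₗ[R] N) (π : N →ₗ[R] M) (h : N →ₗ[R] N)
    (hι : dN ∘ₗ ι = ι ∘ₗ dM) (hπ : dM ∘ₗ π = π ∘ₗ dN)
    (c1 : π ∘ₗ ι = LinearMap.id)
    (c2 : ι ∘ₗ π - LinearMap.id = dN ∘ₗ h + h ∘ₗ dN)
    (c3 : π ∘ₗ h = 0) (c4 : h ∘ₗ ι = 0) (c5 : h ∘ₗ h = 0)
    -- sign operators encoding the grading
    (σM : M →ₗ[R] M) (σN : N →ₗ[R] N)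
    (sM : σM ∘ₗ σM = LinearMap.id) (sN : σN ∘ₗ σN = LinearMap.id)
    (sdN : σN ∘ₗ dN = -(dN ∘ₗ σN)) (sh : σN ∘ₗ h = -(h ∘ₗ σN))
    (sι : σN ∘ₗ ι = ι ∘ₗ σM) (sπ : π ∘ₗ σN = σM ∘ₗ π)
    -- the coalgebra structures; `(M ⇄ N, h)` is a coalgebra contraction
    (Δ : N →ₗ[R] N ⊗[R] N) (ΔM : M →ₗ[R] M ⊗[R] M)
    (hΔι : Δ ∘ₗ ι = TensorProduct.map ι ι ∘ₗ ΔM)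
    (hΔπ : ΔM ∘ₗ π = TensorProduct.map π π ∘ₗ Δ)
    (hΔh : (TensorProduct.map ((ι ∘ₗ π) ∘ₗ σN) h
              + TensorProduct.map h LinearMap.id) ∘ₗ Δ = Δ ∘ₗ h)
    -- `∂` is a coderivation of degree 1 belonging to `𝒩(N,h)`
    (D : N →ₗ[R] N) (sD : σN ∘ₗ D = -(D ∘ₗ σN))
    (hcoder : Δ ∘ₗ D =
      (TensorProduct.map D LinearMap.id + TensorProduct.map σN D) ∘ₗ Δ)
    (n1 : ∀ x : M, ∃ s : ℕ, ∀ n ≥ s, ((h ∘ₗ D) ^ n) (ι x) = 0)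
    (n2 : ∀ y : N, ∃ s : ℕ, ∀ n ≥ s, π (((D ∘ₗ h) ^ n) y) = 0) :
    ∀ n : ℕ,
      (((TensorProduct.map ((ι ∘ₗ π) ∘ₗ σN) h + TensorProduct.map h LinearMap.id)
          ∘ₗ (TensorProduct.map D LinearMap.id + TensorProduct.map σN D)) ^ n)
        ∘ₗ TensorProduct.map ι ι =
      ∑ i ∈ Finset.range (n + 1),
        TensorProduct.map (((h ∘ₗ D) ^ i) ∘ₗ ι) (((h ∘ₗ D) ^ (n - i)) ∘ₗ ι) := by

  -- pointwise consequences of the contraction identities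
  have c1' : ∀ x : M, π (ι x) = x := fun x => by
    simpa using LinearMap.ext_iff.mp c1 x
  have c3' : ∀ w : N, π (h w) = 0 := fun w => by
    simpa using LinearMap.ext_iff.mp c3 w
  have c4' : ∀ x : M, h (ι x) = 0 := fun x => by
    simpa using LinearMap.ext_iff.mp c4 x
  have c5' : ∀ w : N, h (h w) = 0 := fun w => by
    simpa using LinearMap.ext_iff.mp c5 w
  have sN' : ∀ w : N, σN (σN w) = w := fun w => by
    simpa using LinearMap.ext_iff.mp sN w
  have sh' : ∀ w : N, h (σN w) = -σN (h w) := fun w => by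
    have := LinearMap.ext_iff.mp sh w
    simp only [LinearMap.comp_apply, LinearMap.neg_apply] at this
    rw [this, neg_neg]
  -- h kills (h∘D)^j ∘ ι
  have hAz : ∀ (j : ℕ) (x : M), h (((h ∘ₗ D) ^ j) (ι x)) = 0 := by
    intro j x
    cases j with
    | zero => simpa using c4' x
    | succ j =>
        rw [pow_succ', Module.End.mul_apply, LinearMap.comp_apply]
        exact c5' _
  -- π kills (h∘D)^(i+1) ∘ ι
  have πA : ∀ (i : ℕ) (x : M), π (((h ∘ₗ D) ^ (i + 1)) (ι x)) = 0 := by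
    intro i x
    rw [pow_succ', Module.End.mul_apply, LinearMap.comp_apply]
    exact c3' _
  have hσAz : ∀ (i : ℕ) (x : M), h (σN (((h ∘ₗ D) ^ i) (ι x))) = 0 := by
    intro i x
    rw [sh', hAz, map_zero, neg_zero]
  -- the key per-term computation
  have key : ∀ (i j : ℕ) (x y : M),
      ((TensorProduct.map ((ι ∘ₗ π) ∘ₗ σN) h + TensorProduct.map h LinearMap.id)
          ∘ₗ (TensorProduct.map D LinearMap.id + TensorProduct.map σN D))
        ((((h ∘ₗ D) ^ i) (ι x)) ⊗ₜ[R] (((h ∘ₗ D) ^ j) (ι y)))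
      = (((h ∘ₗ D) ^ (i + 1)) (ι x)) ⊗ₜ[R] (((h ∘ₗ D) ^ j) (ι y))
        + (ι (π (((h ∘ₗ D) ^ i) (ι x)))) ⊗ₜ[R] (((h ∘ₗ D) ^ (j + 1)) (ι y)) := by
    intro i j x y
    simp only [LinearMap.comp_apply, LinearMap.add_apply, TensorProduct.map_tmul,
      LinearMap.id_coe, id_eq, map_add, hAz, tmul_zero, hσAz, zero_tmul,
      add_zero, zero_add, sN', pow_succ', Module.End.mul_apply]
  intro n
  induction n with
  | zero =>
      simp [Module.End.one_eq_id]
  | succ n ih =>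
      rw [pow_succ', Module.End.mul_eq_comp, LinearMap.comp_assoc, ih]
      apply TensorProduct.ext'
      intro x y
      have e1 : ∀ i ∈ Finset.range (n + 1),
          ((TensorProduct.map ((ι ∘ₗ π) ∘ₗ σN) h + TensorProduct.map h LinearMap.id)
            ∘ₗ (TensorProduct.map D LinearMap.id + TensorProduct.map σN D))
            ((TensorProduct.map (((h ∘ₗ D) ^ i) ∘ₗ ι) (((h ∘ₗ D) ^ (n - i)) ∘ₗ ι))
              (x ⊗ₜ[R] y))
          = (((h ∘ₗ D) ^ (i + 1)) (ι x)) ⊗ₜ[R] (((h ∘ₗ D) ^ (n - i)) (ι y))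
            + (ι (π (((h ∘ₗ D) ^ i) (ι x)))) ⊗ₜ[R] (((h ∘ₗ D) ^ (n - i + 1)) (ι y)) := by
        intro i _
        have harg : (TensorProduct.map (((h ∘ₗ D) ^ i) ∘ₗ ι)
              (((h ∘ₗ D) ^ (n - i)) ∘ₗ ι)) (x ⊗ₜ[R] y)
            = (((h ∘ₗ D) ^ i) (ι x)) ⊗ₜ[R] (((h ∘ₗ D) ^ (n - i)) (ι y)) := by
          simp [TensorProduct.map_tmul]
        rw [harg]
        exact key i (n - i) x y
      rw [LinearMap.comp_apply, LinearMap.sum_apply, map_sum,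
        Finset.sum_congr rfl e1, Finset.sum_add_distrib]
      have second : (∑ i ∈ Finset.range (n + 1),
          (ι (π (((h ∘ₗ D) ^ i) (ι x)))) ⊗ₜ[R] (((h ∘ₗ D) ^ (n - i + 1)) (ι y)))
          = (ι x) ⊗ₜ[R] (((h ∘ₗ D) ^ (n + 1)) (ι y)) := by
        rw [Finset.sum_eq_single_of_mem 0 (Finset.mem_range.mpr (Nat.succ_pos n))]
        · simp [c1']
        · intro i _ hi
          obtain ⟨m, rfl⟩ := Nat.exists_eq_succ_of_ne_zero hi
          rw [πA, map_zero, zero_tmul]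
      rw [second, LinearMap.sum_apply]
      conv_rhs => rw [Finset.sum_range_succ']
      simp only [TensorProduct.map_tmul, LinearMap.comp_apply, Nat.add_sub_add_right,
        pow_zero, Module.End.one_apply, Nat.sub_zero]
end

section
/- Homotopy transfer of coalgebra structure (Huebschmann–Kadeishvili, without assuming (d+∂)² = 0): if (M ⇄ N via ι, π, h) is a coalgebra contraction and ∂ ∈ 𝒩(N,h) is a coderivation of degree 1, then ι_∂ = Σ(h∂)^n ι and π_∂ = Σπ(∂h)^n are morphisms of graded coalgebras, and D_∂ = π∂ι_∂ is a coderivation of M. -/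
/-!
Write `A = h∂` and `B = ∂h`. The coalgebra-contraction identity `Δh = (ιπσ ⊗ h + h ⊗ 1)Δ` and
the coderivation identity `Δ∂ = (∂ ⊗ 1 + σ ⊗ ∂)Δ` give `ΔA = EΔ` and `ΔB = E'Δ`, where `E` and
`E'` are the two composites of these operators on `N ⊗ N`. Because `hι = 0`, `πh = 0` and `hh = 0`, the operator `E` sends
`A^j ι ⊗ A^k ι` to `A^(j+1) ι ⊗ A^k ι`, plus `ι ⊗ A^(k+1) ι` when `j = 0`; dually for
`π B^j ⊗ π B^k` and `E'`. Iterating gives the Leibniz-type expansions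
`Δ A^n ι = ∑_{j+k=n} (A^j ι ⊗ A^k ι) Δ_M` and `Δ_M π B^n = ∑_{j+k=n} (π B^j ⊗ π B^k) Δ`, and
summing over `n` (all sums are pointwise finite) yields the Cauchy products `ι_∂ ⊗ ι_∂` and
`π_∂ ⊗ π_∂`. Finally `π ι_∂ = 1` and `πσ = σπ` turn the coderivation identity for `∂` into
the one for `D_∂ = π ∂ ι_∂`.
-/

open TensorProduct
open Finset
open Filter (atTop eventually_ge_atTop)

theorem finsum_eq_sum_range_of_forall_ge {X : Type*} [AddCommMonoid X] {f : ℕ → X} {s S : ℕ}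
    (hf : ∀ n ≥ s, f n = 0) (hS : s ≤ S) : ∑ᶠ n, f n = ∑ n ∈ range S, f n :=
  finsum_eq_sum_of_support_subset f fun n hn =>
    mem_coe.2 <| mem_range.2 <| lt_of_not_ge fun hSn => hn (hf n (hS.trans hSn))

theorem Finset.sum_range_sum_antidiagonal_eq_sum_range_sum_range {X : Type*} [AddCommMonoid X]
    {a : ℕ → ℕ → X} {s S : ℕ} (ha : ∀ m k, s ≤ m ∨ s ≤ k → a m k = 0) (hS : 2 * s ≤ S) :
    ∑ n ∈ range S, ∑ p ∈ antidiagonal n, a p.1 p.2 = ∑ m ∈ range S, ∑ k ∈ range S, a m k := by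
  simp_rw [Nat.sum_antidiagonal_eq_sum_range_succ a, sum_range_diag_flip]
  refine sum_congr rfl fun m _ => ?_
  by_cases hm : m < s
  · have hvanish : ∀ k ≥ s, a m k = 0 := fun k hk => ha m k (Or.inr hk)
    exact (eventually_constant_sum hvanish (n := S - m) (by omega)).trans
      (eventually_constant_sum hvanish (by omega)).symm
  · rw [sum_eq_zero fun k _ => ha m k (Or.inl (by omega)),
      sum_eq_zero fun k _ => ha m k (Or.inl (by omega))]

theorem eq_sum_antidiagonal_of_succ_eq {X : Type*} [AddCommMonoid X] (T : X →+ X)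
    {F : ℕ → ℕ → X} (hT₀ : ∀ k, T (F 0 k) = F 1 k + F 0 (k + 1))
    (hT : ∀ m k, T (F (m + 1) k) = F (m + 2) k)
    {x : ℕ → X} (hx₀ : x 0 = F 0 0) (hx : ∀ n, x (n + 1) = T (x n)) (n : ℕ) :
    x n = ∑ p ∈ antidiagonal n, F p.1 p.2 := by
  induction n with
  | zero => simp [hx₀]
  | succ n ih =>
    rw [hx, ih, map_sum]
    cases n with
    | zero => simp [Nat.sum_antidiagonal_succ, hT₀, add_comm]
    | succ n =>
      rw [Nat.sum_antidiagonal_succ, Nat.sum_antidiagonal_succ (n := n + 1),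
        Nat.sum_antidiagonal_succ (n := n)]
      simp only [hT₀, hT]
      abel

namespace TensorProduct

variable {R P P' Q Q' : Type*} [CommSemiring R] [AddCommMonoid P] [Module R P]
  [AddCommMonoid P'] [Module R P'] [AddCommMonoid Q] [Module R Q] [AddCommMonoid Q'] [Module R Q']

theorem eventually_map_apply_eq_sum_range_sum_antidiagonal {f : ℕ → P →ₗ[R] Q}
    {g : ℕ → P' →ₗ[R] Q'} (hf : ∀ x, ∃ s, ∀ n ≥ s, f n x = 0) (hg : ∀ y, ∃ s, ∀ n ≥ s, g n y = 0)
    {F : P →ₗ[R] Q} {G : P' →ₗ[R] Q'} (hF : ∀ x, F x = ∑ᶠ n, f n x)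
    (hG : ∀ y, G y = ∑ᶠ n, g n y) (t : P ⊗[R] P') :
    ∀ᶠ S in atTop, map F G t = ∑ n ∈ range S, ∑ p ∈ antidiagonal n, map (f p.1) (g p.2) t := by
  induction t using TensorProduct.induction_on with
  | zero => exact Filter.Eventually.of_forall fun S => by simp
  | tmul x y =>
    obtain ⟨sx, hsx⟩ := hf x
    obtain ⟨sy, hsy⟩ := hg y
    filter_upwards [eventually_ge_atTop (2 * max sx sy)] with S hS
    have hvanish : ∀ m k, max sx sy ≤ m ∨ max sx sy ≤ k → f m x ⊗ₜ[R] g k y = 0 := by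
      rintro m k (hm | hk)
      · rw [hsx m (le_of_max_le_left hm), zero_tmul]
      · rw [hsy k (le_of_max_le_right hk), tmul_zero]
    rw [map_tmul, hF, hG, finsum_eq_sum_range_of_forall_ge (S := S) hsx (by omega),
      finsum_eq_sum_range_of_forall_ge (S := S) hsy (by omega), sum_tmul]
    simp only [tmul_sum, map_tmul]
    exact (sum_range_sum_antidiagonal_eq_sum_range_sum_range hvanish hS).symm
  | add t₁ t₂ h₁ h₂ =>
    filter_upwards [h₁, h₂] with S hS₁ hS₂
    simp only [map_add, hS₁, hS₂, sum_add_distrib]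

end TensorProduct

section PointwiseFiniteSums

variable {R P Q Q' : Type*} [CommSemiring R] [AddCommMonoid P] [Module R P]
  [AddCommMonoid Q] [Module R Q] [AddCommMonoid Q'] [Module R Q']
  {f : ℕ → P →ₗ[R] Q} {F : P →ₗ[R] Q}

theorem comp_eq_comp_zero_of_comp_succ_eq_zero (hf : ∀ x, ∃ s, ∀ n ≥ s, f n x = 0)
    (hF : ∀ x, F x = ∑ᶠ n, f n x) {g : Q →ₗ[R] Q'} (hg : ∀ n, g ∘ₗ f (n + 1) = 0) :
    g ∘ₗ F = g ∘ₗ f 0 := by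
  ext x
  obtain ⟨s, hs⟩ := hf x
  have hg' : ∀ n, g (f (n + 1) x) = 0 := fun n => by simpa using LinearMap.congr_fun (hg n) x
  rw [LinearMap.comp_apply, hF, finsum_eq_sum_range_of_forall_ge (S := s + 1) hs (by omega),
    map_sum, sum_range_succ']
  simp [hg']

theorem comp_eq_map_comp_of_comp_eq_sum_antidiagonal (hf : ∀ x, ∃ s, ∀ n ≥ s, f n x = 0)
    (hF : ∀ x, F x = ∑ᶠ n, f n x) {ΔP : P →ₗ[R] P ⊗[R] P} {ΔQ : Q →ₗ[R] Q ⊗[R] Q}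
    (hΔ : ∀ n, ΔQ ∘ₗ f n = (∑ p ∈ antidiagonal n, map (f p.1) (f p.2)) ∘ₗ ΔP) :
    ΔQ ∘ₗ F = map F F ∘ₗ ΔP := by
  ext x
  obtain ⟨s, hs⟩ := hf x
  obtain ⟨S, hS, hsS⟩ := ((TensorProduct.eventually_map_apply_eq_sum_range_sum_antidiagonal
    hf hf hF hF (ΔP x)).and (eventually_ge_atTop s)).exists
  calc ΔQ (F x) = ∑ n ∈ range S, ΔQ (f n x) := by
        rw [hF, finsum_eq_sum_range_of_forall_ge hs hsS, map_sum]
    _ = ∑ n ∈ range S, ∑ p ∈ antidiagonal n, map (f p.1) (f p.2) (ΔP x) :=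
        sum_congr rfl fun n _ => by simpa using LinearMap.congr_fun (hΔ n) x
    _ = map F F (ΔP x) := hS.symm

end PointwiseFiniteSums

section Contraction

variable {R M N : Type*} [CommRing R] [AddCommGroup M] [Module R M] [AddCommGroup N] [Module R N]

/-- `σ` is the sign operator `x ↦ (-1)^|x| x`, so this is `D ⊗ 1 + 1 ⊗ D` under the Koszul
sign rule; `tensorHomotopy` is `ιπ ⊗ h + h ⊗ 1` in the same sense. -/
def tensorCoderivation (σ D : N →ₗ[R] N) : N ⊗[R] N →ₗ[R] N ⊗[R] N :=
  map D LinearMap.id + map σ D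

def IsCoderivation (σ : N →ₗ[R] N) (Δ : N →ₗ[R] N ⊗[R] N) (D : N →ₗ[R] N) : Prop :=
  Δ ∘ₗ D = tensorCoderivation σ D ∘ₗ Δ

def tensorHomotopy (ι : M →ₗ[R] N) (π : N →ₗ[R] M) (σ h : N →ₗ[R] N) :
    N ⊗[R] N →ₗ[R] N ⊗[R] N :=
  map ((ι ∘ₗ π) ∘ₗ σ) h + map h LinearMap.id

variable {P P' : Type*} [AddCommGroup P] [Module R P] [AddCommGroup P'] [Module R P']
  {σ h : N →ₗ[R] N}

theorem LinearMap.comp_pow_succ_eq_zero (D : N →ₗ[R] N) {g : N →ₗ[R] P} (hg : g ∘ₗ h = 0)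
    (n : ℕ) : g ∘ₗ ((h ∘ₗ D) ^ (n + 1)) = 0 := by
  rw [pow_succ', Module.End.mul_eq_comp, ← comp_assoc, ← comp_assoc, hg, zero_comp, zero_comp]

theorem LinearMap.pow_succ_comp_eq_zero (D : N →ₗ[R] N) {g : P →ₗ[R] N} (hg : h ∘ₗ g = 0)
    (n : ℕ) : ((D ∘ₗ h) ^ (n + 1)) ∘ₗ g = 0 := by
  rw [pow_succ, Module.End.mul_eq_comp, comp_assoc, comp_assoc, hg, comp_zero, comp_zero]

theorem tensorHomotopy_comp_tensorCoderivation_comp_map (ι : M →ₗ[R] N) (π : N →ₗ[R] M)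
    (D : N →ₗ[R] N) (hσ : σ ∘ₗ σ = LinearMap.id) {u : P →ₗ[R] N} {v : P' →ₗ[R] N}
    (hu : h ∘ₗ σ ∘ₗ u = 0) (hv : h ∘ₗ v = 0) :
    tensorHomotopy ι π σ h ∘ₗ tensorCoderivation σ D ∘ₗ map u v =
      map ((h ∘ₗ D) ∘ₗ u) v + map (ι ∘ₗ π ∘ₗ u) ((h ∘ₗ D) ∘ₗ v) := by
  have hσ' : ∀ z, σ (σ z) = z := fun z => by simpa using LinearMap.congr_fun hσ z
  have hu' : ∀ x, h (σ (u x)) = 0 := fun x => by simpa using LinearMap.congr_fun hu x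
  have hv' : ∀ y, h (v y) = 0 := fun y => by simpa using LinearMap.congr_fun hv y
  ext x y
  simp [tensorHomotopy, tensorCoderivation, hσ', hu', hv', add_comm]

theorem map_comp_tensorCoderivation_comp_tensorHomotopy (ι : M →ₗ[R] N) (π : N →ₗ[R] M)
    (D : N →ₗ[R] N) (hιπ : σ ∘ₗ (ι ∘ₗ π) ∘ₗ σ = ι ∘ₗ π) {φ : N →ₗ[R] P} {ψ : N →ₗ[R] P'}
    (hφ : φ ∘ₗ σ ∘ₗ h = 0) (hψ : ψ ∘ₗ h = 0) :
    map φ ψ ∘ₗ tensorCoderivation σ D ∘ₗ tensorHomotopy ι π σ h =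
      map (φ ∘ₗ D ∘ₗ h) ψ + map (φ ∘ₗ ι ∘ₗ π) (ψ ∘ₗ D ∘ₗ h) := by
  have hιπ' : ∀ z, σ (ι (π (σ z))) = ι (π z) := fun z => by
    simpa using LinearMap.congr_fun hιπ z
  have hφ' : ∀ z, φ (σ (h z)) = 0 := fun z => by simpa using LinearMap.congr_fun hφ z
  have hψ' : ∀ z, ψ (h z) = 0 := fun z => by simpa using LinearMap.congr_fun hψ z
  ext x y
  simp [tensorHomotopy, tensorCoderivation, hιπ', hφ', hψ', add_comm]

variable {ι : M →ₗ[R] N} {π : N →ₗ[R] M} {D : N →ₗ[R] N}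
  {Δ : N →ₗ[R] N ⊗[R] N} {ΔM : M →ₗ[R] M ⊗[R] M}

theorem coproduct_comp_pow_comp_eq_sum_antidiagonal (c1 : π ∘ₗ ι = LinearMap.id)
    (c3 : π ∘ₗ h = 0) (c4 : h ∘ₗ ι = 0) (c5 : h ∘ₗ h = 0) (hσ : σ ∘ₗ σ = LinearMap.id)
    (hσh : σ ∘ₗ h = -(h ∘ₗ σ)) (hΔι : Δ ∘ₗ ι = map ι ι ∘ₗ ΔM)
    (hΔh : tensorHomotopy ι π σ h ∘ₗ Δ = Δ ∘ₗ h) (hD : IsCoderivation σ Δ D) (n : ℕ) :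
    Δ ∘ₗ (((h ∘ₗ D) ^ n) ∘ₗ ι) =
      (∑ p ∈ antidiagonal n, map (((h ∘ₗ D) ^ p.1) ∘ₗ ι) (((h ∘ₗ D) ^ p.2) ∘ₗ ι)) ∘ₗ ΔM := by
  set E := tensorHomotopy ι π σ h ∘ₗ tensorCoderivation σ D
  have hsucc : ∀ m, (h ∘ₗ D) ∘ₗ (((h ∘ₗ D) ^ m) ∘ₗ ι) = ((h ∘ₗ D) ^ (m + 1)) ∘ₗ ι := fun m => by
    rw [pow_succ', Module.End.mul_eq_comp]; rfl
  have hh : ∀ m, h ∘ₗ (((h ∘ₗ D) ^ m) ∘ₗ ι) = 0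
    | 0 => by rw [pow_zero, Module.End.one_eq_id, LinearMap.id_comp, c4]
    | m + 1 => by
      rw [← LinearMap.comp_assoc, LinearMap.comp_pow_succ_eq_zero D c5, LinearMap.zero_comp]
  have hhσ : ∀ m, h ∘ₗ σ ∘ₗ (((h ∘ₗ D) ^ m) ∘ₗ ι) = 0 := fun m => by
    rw [← LinearMap.comp_assoc, show h ∘ₗ σ = -(σ ∘ₗ h) by rw [hσh, neg_neg], LinearMap.neg_comp,
      LinearMap.comp_assoc, hh, LinearMap.comp_zero, neg_zero]
  have hπ : ∀ m, π ∘ₗ (((h ∘ₗ D) ^ (m + 1)) ∘ₗ ι) = 0 := fun m => by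
    rw [← LinearMap.comp_assoc, LinearMap.comp_pow_succ_eq_zero D c3, LinearMap.zero_comp]
  have hstep : ∀ m k, E ∘ₗ map (((h ∘ₗ D) ^ m) ∘ₗ ι) (((h ∘ₗ D) ^ k) ∘ₗ ι) =
      map (((h ∘ₗ D) ^ (m + 1)) ∘ₗ ι) (((h ∘ₗ D) ^ k) ∘ₗ ι) +
        map (ι ∘ₗ π ∘ₗ (((h ∘ₗ D) ^ m) ∘ₗ ι)) (((h ∘ₗ D) ^ (k + 1)) ∘ₗ ι) := fun m k => by
    rw [LinearMap.comp_assoc,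
      tensorHomotopy_comp_tensorCoderivation_comp_map ι π D hσ (hhσ m) (hh k), hsucc, hsucc]
  have hexpand : (E ^ n) ∘ₗ map ι ι =
      ∑ p ∈ antidiagonal n, map (((h ∘ₗ D) ^ p.1) ∘ₗ ι) (((h ∘ₗ D) ^ p.2) ∘ₗ ι) := by
    refine eq_sum_antidiagonal_of_succ_eq (LinearMap.llcomp R (M ⊗[R] M) _ _ E).toAddMonoidHom
      (F := fun m k => map (((h ∘ₗ D) ^ m) ∘ₗ ι) (((h ∘ₗ D) ^ k) ∘ₗ ι))
      (x := fun n => (E ^ n) ∘ₗ map ι ι) (fun k => ?_) (fun m k => ?_)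
      (by simp [Module.End.one_eq_id]) (fun n => ?_) n
    · rw [LinearMap.toAddMonoidHom_coe, LinearMap.llcomp_apply', hstep, pow_zero,
        Module.End.one_eq_id, LinearMap.id_comp, c1, LinearMap.comp_id]
    · rw [LinearMap.toAddMonoidHom_coe, LinearMap.llcomp_apply', hstep, hπ, LinearMap.comp_zero,
        TensorProduct.map_zero_left, add_zero]
    · rw [pow_succ', Module.End.mul_eq_comp]; rfl
  have hΔE : E ∘ₗ Δ = Δ ∘ₗ (h ∘ₗ D) := by
    rw [← LinearMap.comp_assoc, ← hΔh, LinearMap.comp_assoc, LinearMap.comp_assoc, hD]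
  rw [← LinearMap.comp_assoc, ← Module.End.commute_pow_left_of_commute hΔE, LinearMap.comp_assoc,
    hΔι, ← LinearMap.comp_assoc, hexpand]

theorem coproduct_comp_comp_pow_eq_sum_antidiagonal (c1 : π ∘ₗ ι = LinearMap.id)
    (c3 : π ∘ₗ h = 0) (c4 : h ∘ₗ ι = 0) (c5 : h ∘ₗ h = 0) (hσh : σ ∘ₗ h = -(h ∘ₗ σ))
    (hιπ : σ ∘ₗ (ι ∘ₗ π) ∘ₗ σ = ι ∘ₗ π) (hΔπ : ΔM ∘ₗ π = map π π ∘ₗ Δ)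
    (hΔh : tensorHomotopy ι π σ h ∘ₗ Δ = Δ ∘ₗ h) (hD : IsCoderivation σ Δ D) (n : ℕ) :
    ΔM ∘ₗ (π ∘ₗ ((D ∘ₗ h) ^ n)) =
      (∑ p ∈ antidiagonal n, map (π ∘ₗ ((D ∘ₗ h) ^ p.1)) (π ∘ₗ ((D ∘ₗ h) ^ p.2))) ∘ₗ Δ := by
  set E := tensorCoderivation σ D ∘ₗ tensorHomotopy ι π σ h
  have hsucc : ∀ m, (π ∘ₗ ((D ∘ₗ h) ^ m)) ∘ₗ D ∘ₗ h = π ∘ₗ ((D ∘ₗ h) ^ (m + 1)) := fun m => by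
    rw [pow_succ, Module.End.mul_eq_comp]; rfl
  have hh : ∀ m, (π ∘ₗ ((D ∘ₗ h) ^ m)) ∘ₗ h = 0
    | 0 => by rw [pow_zero, Module.End.one_eq_id, LinearMap.comp_id, c3]
    | m + 1 => by
      rw [LinearMap.comp_assoc, LinearMap.pow_succ_comp_eq_zero D c5, LinearMap.comp_zero]
  have hσ : ∀ m, (π ∘ₗ ((D ∘ₗ h) ^ m)) ∘ₗ σ ∘ₗ h = 0 := fun m => by
    rw [hσh, LinearMap.comp_neg, ← LinearMap.comp_assoc, hh, LinearMap.zero_comp, neg_zero]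
  have hι : ∀ m, (π ∘ₗ ((D ∘ₗ h) ^ (m + 1))) ∘ₗ ι ∘ₗ π = 0 := fun m => by
    rw [LinearMap.comp_assoc, ← LinearMap.comp_assoc π ι, LinearMap.pow_succ_comp_eq_zero D c4,
      LinearMap.zero_comp, LinearMap.comp_zero]
  have hstep : ∀ m k, map (π ∘ₗ ((D ∘ₗ h) ^ m)) (π ∘ₗ ((D ∘ₗ h) ^ k)) ∘ₗ E =
      map (π ∘ₗ ((D ∘ₗ h) ^ (m + 1))) (π ∘ₗ ((D ∘ₗ h) ^ k)) +
        map ((π ∘ₗ ((D ∘ₗ h) ^ m)) ∘ₗ ι ∘ₗ π) (π ∘ₗ ((D ∘ₗ h) ^ (k + 1))) := fun m k => by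
    rw [map_comp_tensorCoderivation_comp_tensorHomotopy ι π D hιπ (hσ m) (hh k), hsucc, hsucc]
  have hexpand : map π π ∘ₗ (E ^ n) =
      ∑ p ∈ antidiagonal n, map (π ∘ₗ ((D ∘ₗ h) ^ p.1)) (π ∘ₗ ((D ∘ₗ h) ^ p.2)) := by
    refine eq_sum_antidiagonal_of_succ_eq (LinearMap.lcomp R (M ⊗[R] M) E).toAddMonoidHom
      (F := fun m k => map (π ∘ₗ ((D ∘ₗ h) ^ m)) (π ∘ₗ ((D ∘ₗ h) ^ k)))
      (x := fun n => map π π ∘ₗ (E ^ n)) (fun k => ?_) (fun m k => ?_)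
      (by simp [Module.End.one_eq_id]) (fun n => ?_) n
    · rw [LinearMap.toAddMonoidHom_coe, LinearMap.lcomp_apply', hstep, pow_zero,
        Module.End.one_eq_id, LinearMap.comp_id, ← LinearMap.comp_assoc, c1, LinearMap.id_comp]
    · rw [LinearMap.toAddMonoidHom_coe, LinearMap.lcomp_apply', hstep, hι,
        TensorProduct.map_zero_left, add_zero]
    · rw [pow_succ, Module.End.mul_eq_comp]; rfl
  have hΔE : E ∘ₗ Δ = Δ ∘ₗ (D ∘ₗ h) := by
    rw [← LinearMap.comp_assoc, hD, LinearMap.comp_assoc h Δ, ← hΔh]; rfl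
  rw [← LinearMap.comp_assoc, hΔπ, LinearMap.comp_assoc,
    ← Module.End.commute_pow_left_of_commute hΔE, ← LinearMap.comp_assoc, hexpand]

theorem IsCoderivation.transfer {σM : M →ₗ[R] M} {ι' : M →ₗ[R] N} (hD : IsCoderivation σ Δ D)
    (hΔι' : Δ ∘ₗ ι' = map ι' ι' ∘ₗ ΔM) (hΔπ : ΔM ∘ₗ π = map π π ∘ₗ Δ)
    (hπι' : π ∘ₗ ι' = LinearMap.id) (hπσ : π ∘ₗ σ = σM ∘ₗ π) :
    IsCoderivation σM ΔM (π ∘ₗ D ∘ₗ ι') := by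
  have hπι'' : ∀ x, π (ι' x) = x := fun x => by simpa using LinearMap.congr_fun hπι' x
  have hπσ' : ∀ z, π (σ z) = σM (π z) := fun z => by simpa using LinearMap.congr_fun hπσ z
  have hpush : map π π ∘ₗ tensorCoderivation σ D ∘ₗ map ι' ι' =
      tensorCoderivation σM (π ∘ₗ D ∘ₗ ι') := by
    ext x y
    simp [tensorCoderivation, hπι'', hπσ']
  calc ΔM ∘ₗ π ∘ₗ D ∘ₗ ι' = map π π ∘ₗ (Δ ∘ₗ D) ∘ₗ ι' := by
        rw [← LinearMap.comp_assoc, hΔπ]; rfl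
    _ = tensorCoderivation σM (π ∘ₗ D ∘ₗ ι') ∘ₗ ΔM := by
        rw [hD, LinearMap.comp_assoc, hΔι', ← hpush]; rfl

end Contraction

theorem stmt10_general {R M N : Type*} [CommRing R]
    [AddCommGroup M] [Module R M] [AddCommGroup N] [Module R N]
    (ι : M →ₗ[R] N) (π : N →ₗ[R] M) (h : N →ₗ[R] N)
    (c1 : π ∘ₗ ι = LinearMap.id)
    (c3 : π ∘ₗ h = 0) (c4 : h ∘ₗ ι = 0) (c5 : h ∘ₗ h = 0)
    -- sign operators encoding the grading
    (σM : M →ₗ[R] M) (σN : N →ₗ[R] N)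
    (sN : σN ∘ₗ σN = LinearMap.id)
    (sh : σN ∘ₗ h = -(h ∘ₗ σN))
    (sι : σN ∘ₗ ι = ι ∘ₗ σM) (sπ : π ∘ₗ σN = σM ∘ₗ π)
    -- the dg coalgebra structure of `N` and the transferred coproduct on `M`
    (Δ : N →ₗ[R] N ⊗[R] N)
    (ΔM : M →ₗ[R] M ⊗[R] M)
    -- `(M ⇄ N, h)` is a coalgebra contraction
    (hΔι : Δ ∘ₗ ι = TensorProduct.map ι ι ∘ₗ ΔM)
    (hΔπ : ΔM ∘ₗ π = TensorProduct.map π π ∘ₗ Δ)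
    (hΔh : (TensorProduct.map ((ι ∘ₗ π) ∘ₗ σN) h
              + TensorProduct.map h LinearMap.id) ∘ₗ Δ = Δ ∘ₗ h)
    -- `∂` is a coderivation of degree 1 belonging to `𝒩(N,h)`
    (D : N →ₗ[R] N)
    (hcoder : Δ ∘ₗ D =
      (TensorProduct.map D LinearMap.id + TensorProduct.map σN D) ∘ₗ Δ)
    (n1 : ∀ x : M, ∃ s : ℕ, ∀ n ≥ s, ((h ∘ₗ D) ^ n) (ι x) = 0)
    (n2 : ∀ y : N, ∃ s : ℕ, ∀ n ≥ s, π (((D ∘ₗ h) ^ n) y) = 0)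
    -- the transferred maps
    (ιD : M →ₗ[R] N) (hιD : ∀ x : M, ιD x = ∑ᶠ n : ℕ, ((h ∘ₗ D) ^ n) (ι x))
    (πD : N →ₗ[R] M) (hπD : ∀ y : N, πD y = ∑ᶠ n : ℕ, π (((D ∘ₗ h) ^ n) y))
    (DD : M →ₗ[R] M) (hDD : DD = π ∘ₗ D ∘ₗ ιD) :
    -- `ι_∂`, `π_∂` are morphisms of graded coalgebras,
    -- `D_∂` is a coderivation of `M`
    Δ ∘ₗ ιD = TensorProduct.map ιD ιD ∘ₗ ΔM ∧
    ΔM ∘ₗ πD = TensorProduct.map πD πD ∘ₗ Δ ∧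
    ΔM ∘ₗ DD =
      (TensorProduct.map DD LinearMap.id + TensorProduct.map σM DD) ∘ₗ ΔM := by
  have hιD_coalg : Δ ∘ₗ ιD = map ιD ιD ∘ₗ ΔM :=
    comp_eq_map_comp_of_comp_eq_sum_antidiagonal (f := fun n => ((h ∘ₗ D) ^ n) ∘ₗ ι) n1 hιD
      (coproduct_comp_pow_comp_eq_sum_antidiagonal c1 c3 c4 c5 sN sh hΔι hΔh hcoder)
  have hιπ : σN ∘ₗ (ι ∘ₗ π) ∘ₗ σN = ι ∘ₗ π := by
    rw [LinearMap.comp_assoc, sπ, ← LinearMap.comp_assoc π σM ι, ← sι, LinearMap.comp_assoc,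
      ← LinearMap.comp_assoc _ σN σN, sN, LinearMap.id_comp]
  have hπD_coalg : ΔM ∘ₗ πD = map πD πD ∘ₗ Δ :=
    comp_eq_map_comp_of_comp_eq_sum_antidiagonal (f := fun n => π ∘ₗ ((D ∘ₗ h) ^ n)) n2 hπD
      (coproduct_comp_comp_pow_eq_sum_antidiagonal c1 c3 c4 c5 sh hιπ hΔπ hΔh hcoder)
  have hπιD : π ∘ₗ ιD = LinearMap.id := by
    rw [comp_eq_comp_zero_of_comp_succ_eq_zero (f := fun n => ((h ∘ₗ D) ^ n) ∘ₗ ι) n1 hιD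
      fun n => by rw [← LinearMap.comp_assoc, LinearMap.comp_pow_succ_eq_zero D c3,
        LinearMap.zero_comp]]
    rw [pow_zero, Module.End.one_eq_id, LinearMap.id_comp, c1]
  refine ⟨hιD_coalg, hπD_coalg, ?_⟩
  rw [hDD]
  exact IsCoderivation.transfer hcoder hιD_coalg hΔπ hπιD sπ

/-- Huebschmann–Kadeishvili, without assuming `(d+∂)² = 0`: if
`(M ⇄ N via ι, π, h)` is a coalgebra contraction and `∂ ∈ 𝒩(N,h)` is a
coderivation of degree `1`, then `ι_∂ = Σ(h∂)^n ι` and `π_∂ = Σπ(∂h)^n` are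
morphisms of graded coalgebras and `D_∂ = π∂ι_∂` is a coderivation of `M`
(Koszul signs are encoded via the sign operators `σ`). -/
theorem stmt10 {R M N : Type*} [CommRing R]
    [AddCommGroup M] [Module R M] [AddCommGroup N] [Module R N]
    (dM : M →ₗ[R] M) (dN : N →ₗ[R] N)
    (hdM : dM ∘ₗ dM = 0) (hdN : dN ∘ₗ dN = 0)
    (ι : M →ₗ[R] N) (π : N →ₗ[R] M) (h : N →ₗ[R] N)
    (hι : dN ∘ₗ ι = ι ∘ₗ dM) (hπ : dM ∘ₗ π = π ∘ₗ dN)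
    (c1 : π ∘ₗ ι = LinearMap.id)
    (c2 : ι ∘ₗ π - LinearMap.id = dN ∘ₗ h + h ∘ₗ dN)
    (c3 : π ∘ₗ h = 0) (c4 : h ∘ₗ ι = 0) (c5 : h ∘ₗ h = 0)
    -- sign operators encoding the grading
    (σM : M →ₗ[R] M) (σN : N →ₗ[R] N)
    (sM : σM ∘ₗ σM = LinearMap.id) (sN : σN ∘ₗ σN = LinearMap.id)
    (sdN : σN ∘ₗ dN = -(dN ∘ₗ σN)) (sh : σN ∘ₗ h = -(h ∘ₗ σN))
    (sι : σN ∘ₗ ι = ι ∘ₗ σM) (sπ : π ∘ₗ σN = σM ∘ₗ π)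
    -- the dg coalgebra structure of `N` and the transferred coproduct on `M`
    (Δ : N →ₗ[R] N ⊗[R] N)
    (hcoassoc : (TensorProduct.assoc R N N N).toLinearMap
        ∘ₗ TensorProduct.map Δ LinearMap.id ∘ₗ Δ =
      TensorProduct.map LinearMap.id Δ ∘ₗ Δ)
    (hΔd : Δ ∘ₗ dN =
      (TensorProduct.map dN LinearMap.id + TensorProduct.map σN dN) ∘ₗ Δ)
    (ΔM : M →ₗ[R] M ⊗[R] M)
    (hΔM : ΔM = TensorProduct.map π π ∘ₗ Δ ∘ₗ ι)
    -- `(M ⇄ N, h)` is a coalgebra contraction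
    (hΔι : Δ ∘ₗ ι = TensorProduct.map ι ι ∘ₗ ΔM)
    (hΔπ : ΔM ∘ₗ π = TensorProduct.map π π ∘ₗ Δ)
    (hΔh : (TensorProduct.map ((ι ∘ₗ π) ∘ₗ σN) h
              + TensorProduct.map h LinearMap.id) ∘ₗ Δ = Δ ∘ₗ h)
    -- `∂` is a coderivation of degree 1 belonging to `𝒩(N,h)`
    (D : N →ₗ[R] N) (sD : σN ∘ₗ D = -(D ∘ₗ σN))
    (hcoder : Δ ∘ₗ D =
      (TensorProduct.map D LinearMap.id + TensorProduct.map σN D) ∘ₗ Δ)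
    (n1 : ∀ x : M, ∃ s : ℕ, ∀ n ≥ s, ((h ∘ₗ D) ^ n) (ι x) = 0)
    (n2 : ∀ y : N, ∃ s : ℕ, ∀ n ≥ s, π (((D ∘ₗ h) ^ n) y) = 0)
    -- the transferred maps
    (ιD : M →ₗ[R] N) (hιD : ∀ x : M, ιD x = ∑ᶠ n : ℕ, ((h ∘ₗ D) ^ n) (ι x))
    (πD : N →ₗ[R] M) (hπD : ∀ y : N, πD y = ∑ᶠ n : ℕ, π (((D ∘ₗ h) ^ n) y))
    (DD : M →ₗ[R] M) (hDD : DD = π ∘ₗ D ∘ₗ ιD) :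
    -- `ι_∂`, `π_∂` are morphisms of graded coalgebras,
    -- `D_∂` is a coderivation of `M`
    Δ ∘ₗ ιD = TensorProduct.map ιD ιD ∘ₗ ΔM ∧
    ΔM ∘ₗ πD = TensorProduct.map πD πD ∘ₗ Δ ∧
    ΔM ∘ₗ DD =
      (TensorProduct.map DD LinearMap.id + TensorProduct.map σM DD) ∘ₗ ΔM :=
  stmt10_general ι π h c1 c3 c4 c5 σM σN sN sh sι sπ Δ ΔM hΔι hΔπ hΔh D hcoder n1 n2 ιD hιD πD hπD
    DD hDD
end

section
/- Uniqueness characterization of the perturbed inclusion: if ∪_n ker(h∂)^n = N and ∂ is a perturbation of d_N, then ι_∂ = Σ(h∂)^n ι is the unique degree-0 linear map f : M → N whose image is a subcomplex of (N, d_N+∂) and which satisfies hf = 0 and πf = Id_M; moreover ι_∂ = (Id_N − h∂)^{−1} ι. -/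
/-- uniqueness characterization of the perturbed inclusion: if
`∪_n ker(h∂)^n = N` and `∂` is a perturbation of `d_N`, then `ι_∂ = Σ(h∂)^n ι`
is the unique degree-0 linear map `f : M → N` whose image is a subcomplex of
`(N, d_N+∂)` and which satisfies `hf = 0` and `πf = Id_M`; moreover
`ι_∂ = (Id_N − h∂)⁻¹ ι`, i.e. `(Id_N − h∂) ∘ ι_∂ = ι`. -/
theorem stmt12 {R M N : Type*} [CommRing R]
    [AddCommGroup M] [Module R M] [AddCommGroup N] [Module R N]
    (dM : M →ₗ[R] M) (dN : N →ₗ[R] N) (hdN : dN ∘ₗ dN = 0)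
    (ι : M →ₗ[R] N) (π : N →ₗ[R] M) (h : N →ₗ[R] N)
    (hι : dN ∘ₗ ι = ι ∘ₗ dM) (hπ : dM ∘ₗ π = π ∘ₗ dN)
    (c1 : π ∘ₗ ι = LinearMap.id)
    (c2 : ι ∘ₗ π - LinearMap.id = dN ∘ₗ h + h ∘ₗ dN)
    (c3 : π ∘ₗ h = 0) (c4 : h ∘ₗ ι = 0) (c5 : h ∘ₗ h = 0)
    -- `∂` is a perturbation of `d_N` and `∪_n ker (h∂)^n = N`
    (D : N →ₗ[R] N) (hpert : (dN + D) ∘ₗ (dN + D) = 0)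
    (hker : ∀ y : N, ∃ n : ℕ, ((h ∘ₗ D) ^ n) y = 0)
    -- the perturbed inclusion
    (ιD : M →ₗ[R] N) (hιD : ∀ x : M, ιD x = ∑ᶠ n : ℕ, ((h ∘ₗ D) ^ n) (ι x)) :
    -- the image of `ι_∂` is a subcomplex of `(N, d_N+∂)`
    (∀ x : M, ∃ y : M, (dN + D) (ιD x) = ιD y) ∧
    -- the "gauge fixing" conditions
    h ∘ₗ ιD = 0 ∧ π ∘ₗ ιD = LinearMap.id ∧
    -- uniqueness among such maps
    (∀ f : M →ₗ[R] N,
      (∀ x : M, ∃ y : M, (dN + D) (f x) = f y) →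
      h ∘ₗ f = 0 → π ∘ₗ f = LinearMap.id → f = ιD) ∧
    -- `ι_∂ = (Id_N − h∂)⁻¹ ι`
    (LinearMap.id - h ∘ₗ D) ∘ₗ ιD = ι := by
  set A := h ∘ₗ D with hA
  have hAapp : ∀ w : N, A w = h (D w) := fun w => rfl
  have hstab : ∀ y : N, ∃ n, ∀ m, n ≤ m → (A ^ m) y = 0 := by
    intro y
    obtain ⟨n, hn⟩ := hker y
    refine ⟨n, fun m hm => ?_⟩
    obtain ⟨k, rfl⟩ := Nat.exists_eq_add_of_le hm
    rw [show n + k = k + n by omega, pow_add, Module.End.mul_apply, hn, map_zero]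
  have hinj : ∀ v : N, v - A v = 0 → v = 0 := by
    intro v hv
    have hv' : A v = v := (sub_eq_zero.mp hv).symm
    have hpow : ∀ n, (A ^ n) v = v := by
      intro n
      induction n with
      | zero => simp
      | succ n ih => rw [pow_succ, Module.End.mul_apply, hv', ih]
    obtain ⟨n, hn⟩ := hker v
    rw [hpow n] at hn
    exact hn
  have c1' : ∀ x : M, π (ι x) = x := fun x => by
    have := LinearMap.ext_iff.1 c1 x; simpa using this
  have c2' : ∀ w : N, ι (π w) - w = dN (h w) + h (dN w) := by
    intro w
    have := LinearMap.ext_iff.1 c2 w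
    simpa using this
  have c3' : ∀ w : N, π (h w) = 0 := fun w => by
    have := LinearMap.ext_iff.1 c3 w; simpa using this
  have c4' : ∀ x : M, h (ι x) = 0 := fun x => by
    have := LinearMap.ext_iff.1 c4 x; simpa using this
  have c5' : ∀ w : N, h (h w) = 0 := fun w => by
    have := LinearMap.ext_iff.1 c5 w; simpa using this
  have hrep : ∀ x : M, ∃ n₀ : ℕ, (∀ m, n₀ ≤ m → (A ^ m) (ι x) = 0) ∧
      ιD x = ∑ k ∈ Finset.range n₀, (A ^ k) (ι x) := by
    intro x
    obtain ⟨n₀, hn₀⟩ := hstab (ι x)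
    refine ⟨n₀, hn₀, ?_⟩
    rw [hιD]
    apply finsum_eq_finset_sum_of_support_subset
    intro m hm
    simp only [Function.mem_support] at hm
    simp only [Finset.coe_range, Set.mem_Iio]
    by_contra hc
    exact hm (hn₀ m (le_of_not_gt hc))
  -- key: (Id - A) ιD = ι pointwise
  have key1 : ∀ x : M, ιD x - A (ιD x) = ι x := by
    intro x
    obtain ⟨n₀, hn₀, hsum⟩ := hrep x
    rw [hsum, map_sum]
    have hstep : ∀ k, A ((A ^ k) (ι x)) = (A ^ (k + 1)) (ι x) := by
      intro k
      rw [pow_succ', Module.End.mul_apply]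
    calc ∑ k ∈ Finset.range n₀, (A ^ k) (ι x)
          - ∑ k ∈ Finset.range n₀, A ((A ^ k) (ι x))
        = -(∑ k ∈ Finset.range n₀, ((A ^ (k + 1)) (ι x) - (A ^ k) (ι x))) := by
          simp only [hstep]
          rw [Finset.sum_sub_distrib]
          abel
      _ = -((A ^ n₀) (ι x) - (A ^ 0) (ι x)) := by
          rw [Finset.sum_range_sub (fun k => (A ^ k) (ι x))]
      _ = ι x := by
          rcases Nat.eq_zero_or_pos n₀ with h0 | h0
          · subst h0; simpa using (hn₀ 0 le_rfl).symm
          · rw [hn₀ n₀ le_rfl]; simp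
  have hh0 : ∀ x : M, h (ιD x) = 0 := by
    intro x
    obtain ⟨n₀, hn₀, hsum⟩ := hrep x
    rw [hsum, map_sum]
    apply Finset.sum_eq_zero
    intro k _
    match k with
    | 0 => simpa using c4' x
    | k + 1 =>
      rw [pow_succ', Module.End.mul_apply, hAapp]
      exact c5' _
  have hπ1 : ∀ x : M, π (ιD x) = x := by
    intro x
    obtain ⟨n₀, hn₀, hsum⟩ := hrep x
    rw [hsum, map_sum]
    have hterm : ∀ k : ℕ, π ((A ^ (k + 1)) (ι x)) = 0 := by
      intro k
      rw [pow_succ', Module.End.mul_apply, hAapp]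
      exact c3' _
    match n₀, hn₀ with
    | 0, hn₀ =>
      have hι0 : ι x = 0 := by simpa using hn₀ 0 le_rfl
      simp only [Finset.range_zero, Finset.sum_empty]
      rw [← c1' x, hι0, map_zero]
    | n + 1, _ =>
      rw [Finset.sum_range_succ' (fun k => π ((A ^ k) (ι x)))]
      simp only [hterm, Finset.sum_const_zero, zero_add, pow_zero,
        Module.End.one_apply]
      exact c1' x
  -- the subcomplex condition
  have hsub : ∀ x : M, ∃ y : M, (dN + D) (ιD x) = ιD y := by
    intro x
    set g := (dN + D) (ιD x) with hg
    refine ⟨π g, ?_⟩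
    have hpg : dN g + D g = 0 := by
      have := LinearMap.ext_iff.1 hpert (ιD x)
      simpa [hg, LinearMap.add_apply] using this
    have hDg : D g = -dN g := eq_neg_of_add_eq_zero_right hpg
    have hgdef : g = dN (ιD x) + D (ιD x) := by
      simp [hg, LinearMap.add_apply]
    have hAι : A (ιD x) = ιD x - ι x := by
      have hk := key1 x
      rw [← hk]; abel
    have hhdN : h (dN (ιD x)) = ι x - ιD x := by
      have hc := c2' (ιD x)
      rw [hπ1 x, hh0 x, map_zero, zero_add] at hc
      exact hc.symm
    have hhg : h g = 0 := by
      rw [hgdef, map_add, hhdN, ← hAapp, hAι]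
      abel
    have hkey : g - A g = ι (π g) := by
      have hc := c2' g
      rw [hhg, map_zero, zero_add] at hc
      rw [hAapp, hDg, map_neg]
      rw [← hc]; abel
    have : (g - ιD (π g)) - A (g - ιD (π g)) = 0 := by
      rw [map_sub]
      have h2 := key1 (π g)
      calc (g - ιD (π g)) - (A g - A (ιD (π g)))
          = (g - A g) - (ιD (π g) - A (ιD (π g))) := by abel
        _ = ι (π g) - ι (π g) := by rw [hkey, h2]
        _ = 0 := sub_self _
    have := hinj _ this
    exact (sub_eq_zero.mp this)
  refine ⟨hsub, ?_, ?_, ?_, ?_⟩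
  · ext x; simpa using hh0 x
  · ext x; simpa using hπ1 x
  · intro f hfsub hf0 hfπ
    ext x
    have hf0' : ∀ w : M, h (f w) = 0 := fun w => by
      have := LinearMap.ext_iff.1 hf0 w; simpa using this
    have hfπ' : π (f x) = x := by
      have := LinearMap.ext_iff.1 hfπ x; simpa using this
    obtain ⟨y, hy⟩ := hfsub x
    have hAfx : A (f x) = -h (dN (f x)) := by
      have : h ((dN + D) (f x)) = 0 := by rw [hy]; exact hf0' y
      rw [LinearMap.add_apply, map_add] at this
      have := eq_neg_of_add_eq_zero_right this
      rw [hAapp, this]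
    have hkeyf : f x - A (f x) = ι x := by
      have hc := c2' (f x)
      rw [hfπ', hf0' x, map_zero, zero_add] at hc
      rw [hAfx]
      rw [← hc]; abel
    have : (f x - ιD x) - A (f x - ιD x) = 0 := by
      rw [map_sub]
      calc (f x - ιD x) - (A (f x) - A (ιD x))
          = (f x - A (f x)) - (ιD x - A (ιD x)) := by abel
        _ = ι x - ι x := by rw [hkeyf, key1 x]
        _ = 0 := sub_self _
    exact sub_eq_zero.mp (hinj _ this)
  · ext x
    simpa [LinearMap.sub_apply] using key1 x
end

section
/- Over a field K of characteristic ≠ 2, there is no associative product on the 3-dimensional vector space L with basis A, B, H satisfying AB − BA = H, HA − AH = 2A, HB − BH = −2B; i.e., the Lie bracket of sl₂(K) is not the commutator of any associative multiplication on the underlying 3-dimensional space. -/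
/-- over a field `K` of characteristic `≠ 2` there is no
associative (bilinear) product on the 3-dimensional vector space `L = K³` with
basis `A = e₀`, `B = e₁`, `H = e₂` satisfying `AB − BA = H`, `HA − AH = 2A`,
`HB − BH = −2B`; i.e. the Lie bracket of `sl₂(K)` is not the commutator of any
associative multiplication on the underlying 3-dimensional space. -/
theorem stmt19 (K : Type*) [Field K] (hchar : ringChar K ≠ 2) :
    ¬∃ mul : (Fin 3 → K) →ₗ[K] (Fin 3 → K) →ₗ[K] (Fin 3 → K),
      (∀ x y z : Fin 3 → K, mul (mul x y) z = mul x (mul y z)) ∧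
      mul ![1, 0, 0] ![0, 1, 0] - mul ![0, 1, 0] ![1, 0, 0] = ![0, 0, 1] ∧
      mul ![0, 0, 1] ![1, 0, 0] - mul ![1, 0, 0] ![0, 0, 1] =
        (2 : K) • ![1, 0, 0] ∧
      mul ![0, 0, 1] ![0, 1, 0] - mul ![0, 1, 0] ![0, 0, 1] =
        -((2 : K) • ![0, 1, 0]) := by
  rintro ⟨m, assoc, hAB, hHA, hHB⟩
  have h2 : (2:K) ≠ 0 := Ring.two_ne_zero hchar
  have cancel2 : ∀ x : K, (2:K) * x = 0 → x = 0 := fun x hx =>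
    (mul_eq_zero.mp hx).resolve_left h2
  set A : Fin 3 → K := ![1,0,0] with hA
  set B : Fin 3 → K := ![0,1,0] with hB
  set H : Fin 3 → K := ![0,0,1] with hH
  have hdec : ∀ v : Fin 3 → K, v = v 0 • A + v 1 • B + v 2 • H := by
    intro v; funext i; fin_cases i <;> simp [hA, hB, hH]
  have expandL : ∀ v w : Fin 3 → K,
      m v w = v 0 • m A w + v 1 • m B w + v 2 • m H w := by
    intro v w
    conv_lhs => rw [hdec v]
    simp [map_add, map_smul, LinearMap.add_apply, LinearMap.smul_apply]
  have expandR : ∀ v w : Fin 3 → K,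
      m v w = w 0 • m v A + w 1 • m v B + w 2 • m v H := by
    intro v w
    conv_lhs => rw [hdec w]
    simp
  have deriv : ∀ x y : Fin 3 → K,
      m H (m x y) - m (m x y) H = m (m H x - m x H) y + m x (m H y - m y H) := by
    intro x y
    simp only [map_sub, LinearMap.sub_apply]
    rw [assoc x y H, assoc H x y, assoc x H y]
    abel
  have key : ∀ u : Fin 3 → K,
      m H u - m u H = (2 * u 0) • A - (2 * u 1) • B := by
    intro u
    rw [expandR H u, expandL u H]
    have e : u 0 • m H A + u 1 • m H B + u 2 • m H H -
        (u 0 • m A H + u 1 • m B H + u 2 • m H H)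
        = u 0 • (m H A - m A H) + u 1 • (m H B - m B H) := by module
    rw [e, hHA, hHB]
    module
  -- weights
  have dAA : m H (m A A) - m (m A A) H = (4:K) • m A A := by
    have h := deriv A A
    rw [hHA] at h
    rw [h]
    simp only [map_smul, LinearMap.smul_apply]
    module
  have dAB : m H (m A B) - m (m A B) H = 0 := by
    have h := deriv A B
    rw [hHA, hHB] at h
    rw [h]
    simp only [map_smul, map_neg, LinearMap.smul_apply, LinearMap.neg_apply]
    module
  have dBA : m H (m B A) - m (m B A) H = 0 := by
    have h := deriv B A
    rw [hHA, hHB] at h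
    rw [h]
    simp only [map_smul, map_neg, LinearMap.smul_apply, LinearMap.neg_apply]
    module
  have eAA := (key (m A A)).symm.trans dAA
  have eAB := (key (m A B)).symm.trans dAB
  have eBA := (key (m B A)).symm.trans dBA
  have h4 : (4:K) ≠ 0 := fun h => h2 (mul_self_eq_zero.mp (by linear_combination h))
  have hu0 : m A A 0 = 0 := by
    have h := congrFun eAA 0
    simp [hA, hB] at h
    exact h.resolve_left (fun e => h2 (by linear_combination -e))
  have hu2 : m A A 2 = 0 := by
    have h := congrFun eAA 2
    simp [hA, hB] at h
    exact h.resolve_left h4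
  have hp0 : m A B 0 = 0 := by
    have h := congrFun eAB 0
    simp [hA, hB] at h
    exact h.resolve_left h2
  have hp1 : m A B 1 = 0 := by
    have h := congrFun eAB 1
    simp [hA, hB] at h
    exact h.resolve_left h2
  have hq0 : m B A 0 = 0 := by
    have h := congrFun eBA 0
    simp [hA, hB] at h
    exact h.resolve_left h2
  have hq1 : m B A 1 = 0 := by
    have h := congrFun eBA 1
    simp [hA, hB] at h
    exact h.resolve_left h2
  -- linear relations
  have hABc : m A B 2 - m B A 2 = 1 := by
    have h := congrFun hAB 2
    simpa [hA, hB, hH] using h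
  have hHAc : m H A 0 - m A H 0 = 2 := by
    have h := congrFun hHA 0
    simpa [hA, hB, hH] using h
  -- associativity instances
  have F4 : m (m A A) A = m A (m A A) := assoc A A A
  rw [expandL (m A A) A, expandR A (m A A)] at F4
  have F4c := congrFun F4 2
  simp [hu0, hu2] at F4c
  -- F4c : m A A 1 * m B A 2 = m A A 1 * m A B 2  (roughly)
  have F1 : m (m A A) B = m A (m A B) := assoc A A B
  rw [expandL (m A A) B, expandR A (m A B)] at F1
  have F1c := congrFun F1 0
  simp [hu0, hu2, hp0, hp1] at F1c
  have F2 : m (m B A) A = m B (m A A) := assoc B A A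
  rw [expandL (m B A) A, expandR B (m A A)] at F2
  have F2c := congrFun F2 0
  simp [hq0, hq1, hu0, hu2] at F2c
  have F3 : m (m A B) A = m A (m B A) := assoc A B A
  rw [expandL (m A B) A, expandR A (m B A)] at F3
  have F3c := congrFun F3 0
  simp [hp0, hp1, hq0, hq1] at F3c
  have ha : m A A 1 = 0 :=
    F4c.resolve_left (fun e => one_ne_zero (α := K) (by linear_combination -hABc - e))
  have hvb : m A A 1 * m B B 0 = 0 := by rw [ha]; ring
  have hga : m A B 2 * m A H 0 = 0 := by linear_combination hvb - F1c
  have halpha : m A H 0 = -(2 * m A B 2) := by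
    linear_combination F3c - (m A B 2) * hHAc - (m A H 0) * hABc
  have h2gg : (2:K) * (m A B 2 * m A B 2) = 0 := by
    linear_combination (m A B 2) * halpha - hga
  have hg : m A B 2 = 0 := mul_self_eq_zero.mp ((mul_eq_zero.mp h2gg).resolve_left h2)
  have hg' : m B A 2 = -1 := by linear_combination hg - hABc
  have halpha' : m H A 0 = 2 := by linear_combination hHAc + halpha - 2 * hg
  exact h2 (by linear_combination -F2c - hvb + (m H A 0) * hg' - halpha')
end
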